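/- arXiv:2510.13057 — 12 statements merged into one kernel-verified Lean document; each statement's English description precedes it below -/
import Mathlib

section
/- Let n ≥ 4 be an integer, set r₁ = 1, r₂ = n − 2 and μ₁ = 0, and fix real constants C₁ ≠ 0, C₂, C₃. If a smooth function f on an open interval I ⊆ ℝ satisfies both equations (E1) and (E2) at every point of I, then f is constant on I. -/
/-- With n ≥ 4, r₁ = 1, r₂ = n − 2, μ₁ = 0 and fixed constants
C₁ ≠ 0, C₂, C₃, any smooth function on an open interval satisfying both (E1)
and (E2) (with Λ(s) = C₁·C₃·exp((f(s) − C₂)/(n − 1)) − (n − 1)) is constant. -/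
theorem stmt_0 (n r₁ r₂ : ℕ) (hn : 4 ≤ n) (hr₁ : r₁ = 1) (hr₂ : r₂ = n - 2)
    (C₁ C₂ C₃ μ₁ : ℝ) (hC₁ : C₁ ≠ 0) (hμ₁ : μ₁ = 0)
    (a b : ℝ) (hab : a < b) (f : ℝ → ℝ)
    (hf : ContDiffOn ℝ (⊤ : ℕ∞) f (Set.Ioo a b))
    (hE1 : ∀ s ∈ Set.Ioo a b,
      ((n : ℝ) - 1) * deriv (deriv (deriv f)) s
          * (C₁ * C₃ * Real.exp ((f s - C₂) / ((n : ℝ) - 1)) - ((n : ℝ) - 1))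
        = ((n : ℝ) - 1) * deriv f s * deriv (deriv f) s - (deriv f s) ^ 3)
    (hE2 : ∀ s ∈ Set.Ioo a b,
      (((n : ℝ) - 2) * deriv f s * deriv (deriv (deriv f)) s
          - ((r₁ : ℝ) - 1) * (deriv (deriv f) s) ^ 2 + C₁ ^ 2 * μ₁)
          * (C₁ * C₃ * Real.exp ((f s - C₂) / ((n : ℝ) - 1)) - ((n : ℝ) - 1))
        = (r₂ : ℝ) * (deriv f s) ^ 2 * deriv (deriv f) s) :
    ∀ s ∈ Set.Ioo a b, ∀ t ∈ Set.Ioo a b, f s = f t := by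
  have hn2 : (2 : ℕ) ≤ n := by omega
  have hr2cast : (r₂ : ℝ) = (n : ℝ) - 2 := by
    subst hr₂; push_cast [Nat.cast_sub hn2]; ring
  have hnR : (4 : ℝ) ≤ (n : ℝ) := by exact_mod_cast hn
  -- derivative vanishes
  have hderiv : ∀ s ∈ Set.Ioo a b, deriv f s = 0 := by
    intro s hs
    have h1 := hE1 s hs
    have h2 := hE2 s hs
    rw [hr₁, hμ₁, hr2cast] at h2
    set A := deriv f s
    set B := deriv (deriv f) s
    set C := deriv (deriv (deriv f)) s
    set L := C₁ * C₃ * Real.exp ((f s - C₂) / ((n : ℝ) - 1)) - ((n : ℝ) - 1) with hL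
    simp only [Nat.cast_one, sub_self, zero_mul, mul_zero, sub_zero, add_zero] at h2
    -- (n-2)*A*(E1)  vs (n-1)*(E2)
    have key : ((n : ℝ) - 2) * A ^ 4 = 0 := by
      linear_combination ((n : ℝ) - 2) * A * h1 - ((n : ℝ) - 1) * h2
    have hA4 : A ^ 4 = 0 := by
      rcases mul_eq_zero.mp key with h | h
      · nlinarith
      · exact h
    exact pow_eq_zero_iff (by norm_num) |>.mp hA4
  -- constancy from zero derivative
  intro s hs t ht
  have hdiff : DifferentiableOn ℝ f (Set.Ioo a b) := hf.differentiableOn (by simp)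
  have hfd : ∀ x ∈ Set.Ioo a b, fderivWithin ℝ f (Set.Ioo a b) x = 0 := by
    intro x hx
    have hda : DifferentiableAt ℝ f x :=
      (hf.contDiffAt (isOpen_Ioo.mem_nhds hx)).differentiableAt (by simp)
    have h0 : HasDerivAt f 0 x := by
      have := hda.hasDerivAt
      rwa [hderiv x hx] at this
    have h0' : HasFDerivAt f (ContinuousLinearMap.smulRight (1 : ℝ →L[ℝ] ℝ) 0) x := h0
    have : HasFDerivAt f (0 : ℝ →L[ℝ] ℝ) x := by
      rw [show (0 : ℝ →L[ℝ] ℝ) = ContinuousLinearMap.smulRight (1 : ℝ →L[ℝ] ℝ) 0 from by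
        ext; simp]
      exact h0'
    exact this.hasFDerivWithinAt.fderivWithin (isOpen_Ioo.uniqueDiffWithinAt hx)
  exact (convex_Ioo a b).is_const_of_fderivWithin_eq_zero hdiff hfd hs ht
end

section
/- Let n ≥ 4 be an integer and r₁ ≥ 2, r₂ ≥ 1 integers with r₁ + r₂ = n − 1, and fix real constants C₁ ≠ 0, C₂, C₃ and μ₁. If a smooth function f on an open interval I ⊆ ℝ satisfies both equations (E1) and (E2) at every point of I, then f is constant on I. -/
set_option maxHeartbeats 1000000 in
/-- With n ≥ 4, r₁ ≥ 2, r₂ ≥ 1, r₁ + r₂ = n − 1 and fixed constants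
C₁ ≠ 0, C₂, C₃, μ₁, any smooth function on an open interval satisfying both (E1)
and (E2) (with Λ(s) = C₁·C₃·exp((f(s) − C₂)/(n − 1)) − (n − 1)) is constant. -/
theorem stmt_1 (n r₁ r₂ : ℕ) (hn : 4 ≤ n) (hr₁ : 2 ≤ r₁) (hr₂ : 1 ≤ r₂)
    (hsum : r₁ + r₂ = n - 1)
    (C₁ C₂ C₃ μ₁ : ℝ) (hC₁ : C₁ ≠ 0)
    (a b : ℝ) (hab : a < b) (f : ℝ → ℝ)
    (hf : ContDiffOn ℝ (⊤ : ℕ∞) f (Set.Ioo a b))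
    (hE1 : ∀ s ∈ Set.Ioo a b,
      ((n : ℝ) - 1) * deriv (deriv (deriv f)) s
          * (C₁ * C₃ * Real.exp ((f s - C₂) / ((n : ℝ) - 1)) - ((n : ℝ) - 1))
        = ((n : ℝ) - 1) * deriv f s * deriv (deriv f) s - (deriv f s) ^ 3)
    (hE2 : ∀ s ∈ Set.Ioo a b,
      (((n : ℝ) - 2) * deriv f s * deriv (deriv (deriv f)) s
          - ((r₁ : ℝ) - 1) * (deriv (deriv f) s) ^ 2 + C₁ ^ 2 * μ₁)
          * (C₁ * C₃ * Real.exp ((f s - C₂) / ((n : ℝ) - 1)) - ((n : ℝ) - 1))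
        = (r₂ : ℝ) * (deriv f s) ^ 2 * deriv (deriv f) s) :
    ∀ s ∈ Set.Ioo a b, ∀ t ∈ Set.Ioo a b, f s = f t := by
  have hI : IsOpen (Set.Ioo a b) := isOpen_Ioo
  have hn4 : (4:ℝ) ≤ (n:ℝ) := by exact_mod_cast hn
  set N : ℝ := (n:ℝ) - 1 with hNdef
  set A : ℝ := (r₁:ℝ) - 1 with hAdef
  set K : ℝ := C₁^2*μ₁ with hKdef
  set M : ℝ := C₁*C₃ with hMdef
  set u : ℝ → ℝ := deriv f with hu
  set v : ℝ → ℝ := deriv u with hv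
  set w : ℝ → ℝ := deriv v with hw
  have hN3 : (3:ℝ) ≤ N := by rw [hNdef]; linarith
  have hN0 : N ≠ 0 := by linarith
  have hNinv : N * N⁻¹ = 1 := mul_inv_cancel₀ hN0
  have hA1 : (1:ℝ) ≤ A := by
    rw [hAdef]
    have : (2:ℝ) ≤ (r₁:ℝ) := by exact_mod_cast hr₁
    linarith
  have hcast : (r₁:ℝ) + (r₂:ℝ) = (n:ℝ) - 1 := by
    have h1 : ((r₁ + r₂ : ℕ):ℝ) = ((n-1:ℕ):ℝ) := by exact_mod_cast congrArg (Nat.cast) hsum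
    rw [Nat.cast_add, Nat.cast_sub (by omega)] at h1
    simpa using h1
  have hr2ge : (1:ℝ) ≤ (r₂:ℝ) := by exact_mod_cast hr₂
  have hAle : A ≤ N - 2 := by rw [hAdef, hNdef]; linarith
  have hr2A : (r₂:ℝ) = N - 1 - A := by rw [hNdef, hAdef]; linarith
  have hn2 : ((n:ℝ) - 2) = N - 1 := by rw [hNdef]; ring
  rw [show ((n:ℝ) - 2) = N - 1 from hn2] at hE2
  rw [show (r₂:ℝ) = N - 1 - A from hr2A] at hE2
  -- smoothness of derivatives
  have hud : ContDiffOn ℝ (⊤ : ℕ∞) u (Set.Ioo a b) := hf.deriv_of_isOpen hI (by simp)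
  have hvd : ContDiffOn ℝ (⊤ : ℕ∞) v (Set.Ioo a b) := hud.deriv_of_isOpen hI (by simp)
  have Hf : ∀ s ∈ Set.Ioo a b, HasDerivAt f (u s) s := fun s hs =>
    ((hf.differentiableOn (by simp)).differentiableAt (hI.mem_nhds hs)).hasDerivAt
  have Hu : ∀ s ∈ Set.Ioo a b, HasDerivAt u (v s) s := fun s hs =>
    ((hud.differentiableOn (by simp)).differentiableAt (hI.mem_nhds hs)).hasDerivAt
  have Hv : ∀ s ∈ Set.Ioo a b, HasDerivAt v (w s) s := fun s hs =>
    ((hvd.differentiableOn (by simp)).differentiableAt (hI.mem_nhds hs)).hasDerivAt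
  have HL : ∀ s ∈ Set.Ioo a b,
      HasDerivAt (fun x => M * Real.exp ((f x - C₂)/N) - N)
        (M * (Real.exp ((f s - C₂)/N) * (u s / N))) s := fun s hs =>
    ((((Hf s hs).sub_const C₂).div_const N).exp.const_mul M).sub_const N
  -- (★)
  have hstar : ∀ s ∈ Set.Ioo a b,
      N*(K - A*(v s)^2) * (M * Real.exp ((f s - C₂)/N) - N)
        = -(N*A*(u s)^2*(v s)) + (N-1)*(u s)^4 := fun s hs => by
    linear_combination N * (hE2 s hs) - (N-1) * (u s) * (hE1 s hs)
  -- derivative of (★):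
  have hC : ∀ s ∈ Set.Ioo a b,
      N*(-2*A*(v s)*(w s))*(M * Real.exp ((f s - C₂)/N) - N)
        + (K - A*(v s)^2)*M*Real.exp ((f s - C₂)/N)*(u s)
        + N*A*(2*(u s)*(v s)^2 + (u s)^2*(w s)) - 4*(N-1)*(u s)^3*(v s) = 0 := by
    intro s hs
    have hz : HasDerivAt (fun x => N*(K - A*(v x)^2) * (M * Real.exp ((f x - C₂)/N) - N)
        + N*A*(u x)^2*(v x) - (N-1)*(u x)^4) 0 s := by
      apply (hasDerivAt_const s (0:ℝ)).congr_of_eventuallyEq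
      filter_upwards [hI.mem_nhds hs] with x hx
      linear_combination hstar x hx
    have hd : HasDerivAt (fun x => N*(K - A*(v x)^2) * (M * Real.exp ((f x - C₂)/N) - N)
        + N*A*(u x)^2*(v x) - (N-1)*(u x)^4)
        ((N * -(A * (2 * v s ^ 1 * w s))) * (M * Real.exp ((f s - C₂)/N) - N)
          + (N*(K - A*(v s)^2)) * (M * (Real.exp ((f s - C₂)/N) * (u s / N)))
          + (((N*A) * (2 * u s ^ 1 * v s)) * v s + ((N*A) * (u s)^2) * w s)
          - (N-1) * (4 * u s ^ 3 * v s)) s := by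
      exact (((((Hv s hs).pow 2).const_mul A).const_sub K).const_mul N |>.mul (HL s hs)).add
        ((((Hu s hs).pow 2).const_mul (N*A)).mul (Hv s hs)) |>.sub
        (((Hu s hs).pow 4).const_mul (N-1))
    have hkey := hd.unique hz
    linear_combination hkey - ((K - A*(v s)^2)*M*Real.exp ((f s - C₂)/N)*(u s)) * hNinv
  -- the open set V where u ≠ 0 and Λ ≠ 0
  set V : Set ℝ := {x | x ∈ Set.Ioo a b ∧ u x ≠ 0 ∧
      M * Real.exp ((f x - C₂) / N) - N ≠ 0} with hVdef
  have hVopen : IsOpen V := by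
    have hgc : ContinuousOn (fun x => M * Real.exp ((f x - C₂)/N) - N) (Set.Ioo a b) :=
      (continuousOn_const.mul (Real.continuous_exp.comp_continuousOn
        (((hf.continuousOn).sub continuousOn_const).div_const N))).sub continuousOn_const
    have h1 : IsOpen ((Set.Ioo a b) ∩ u ⁻¹' {(0:ℝ)}ᶜ) :=
      (hud.continuousOn).isOpen_inter_preimage hI isOpen_compl_singleton
    have h2 : IsOpen ((Set.Ioo a b) ∩
        (fun x => M * Real.exp ((f x - C₂)/N) - N) ⁻¹' {(0:ℝ)}ᶜ) :=
      hgc.isOpen_inter_preimage hI isOpen_compl_singleton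
    have hVeq : V = ((Set.Ioo a b) ∩ u ⁻¹' {(0:ℝ)}ᶜ) ∩ ((Set.Ioo a b) ∩
        (fun x => M * Real.exp ((f x - C₂)/N) - N) ⁻¹' {(0:ℝ)}ᶜ) := by
      ext x
      simp only [hVdef, Set.mem_setOf_eq, Set.mem_inter_iff, Set.mem_preimage,
        Set.mem_compl_iff, Set.mem_singleton_iff]
      tauto
    rw [hVeq]
    exact h1.inter h2
  -- (★★)
  have hP2 : ∀ s ∈ V,
      -(N*(4*(N-1)-A))*(v s)*(M * Real.exp ((f s - C₂)/N) - N)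
        + (N-1)*(u s)^2*(M * Real.exp ((f s - C₂)/N) - N)
        + N*(N-1-A)*(u s)^2 = 0 := by
    rintro s ⟨hs, hu0, hL0⟩
    apply mul_left_cancel₀ (pow_ne_zero 3 hu0)
    rw [mul_zero]
    linear_combination N*(M * Real.exp ((f s - C₂)/N) - N) * (hC s hs)
      + (2*A*(v s)*N*(M * Real.exp ((f s - C₂)/N) - N) - A*N*(u s)^2) * (hE1 s hs)
      - M*Real.exp ((f s - C₂)/N)*(u s) * (hstar s hs)
  -- derivative of (★★)
  have hD2 : ∀ s ∈ V,
      -(N*(4*(N-1)-A))*(N*(w s)*(M * Real.exp ((f s - C₂)/N) - N)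
          + (v s)*M*Real.exp ((f s - C₂)/N)*(u s))
        + (N-1)*(2*N*(u s)*(v s)*(M * Real.exp ((f s - C₂)/N) - N)
          + (u s)^3*M*Real.exp ((f s - C₂)/N))
        + 2*N^2*(N-1-A)*(u s)*(v s) = 0 := by
    rintro s ⟨hs, hu0, hL0⟩
    have hz : HasDerivAt (fun x =>
        -(N*(4*(N-1)-A))*(v x)*(M * Real.exp ((f x - C₂)/N) - N)
          + (N-1)*(u x)^2*(M * Real.exp ((f x - C₂)/N) - N)
          + N*(N-1-A)*(u x)^2) 0 s := by
      apply (hasDerivAt_const s (0:ℝ)).congr_of_eventuallyEq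
      filter_upwards [hVopen.mem_nhds ⟨hs, hu0, hL0⟩] with x hx
      exact hP2 x hx
    have hd : HasDerivAt (fun x =>
        -(N*(4*(N-1)-A))*(v x)*(M * Real.exp ((f x - C₂)/N) - N)
          + (N-1)*(u x)^2*(M * Real.exp ((f x - C₂)/N) - N)
          + N*(N-1-A)*(u x)^2)
        (((-(N*(4*(N-1)-A)) * w s) * (M * Real.exp ((f s - C₂)/N) - N)
            + (-(N*(4*(N-1)-A)) * v s) * (M * (Real.exp ((f s - C₂)/N) * (u s / N))))
          + (((N-1) * (2 * u s ^ 1 * v s)) * (M * Real.exp ((f s - C₂)/N) - N)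
            + ((N-1) * (u s)^2) * (M * (Real.exp ((f s - C₂)/N) * (u s / N))))
          + ((N*(N-1-A)) * (2 * u s ^ 1 * v s))) s := by
      exact (((Hv s hs).const_mul (-(N*(4*(N-1)-A))) |>.mul (HL s hs)).add
        ((((Hu s hs).pow 2).const_mul (N-1)).mul (HL s hs))).add
        (((Hu s hs).pow 2).const_mul (N*(N-1-A)))
    have hkey := hd.unique hz
    linear_combination N * hkey
      + (N*(4*(N-1)-A)*(v s)*M*Real.exp ((f s - C₂)/N)*(u s)
         - (N-1)*(u s)^3*M*Real.exp ((f s - C₂)/N)) * hNinv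
  -- (‡)
  have htdag : ∀ s ∈ V,
      -3*N^2*(4*(N-1)-A)*(v s)
        + (u s)^2*((N-1)*M*Real.exp ((f s - C₂)/N) + N*(8*(N-1)-3*A)) = 0 := by
    rintro s ⟨hs, hu0, hL0⟩
    have h2N : (2*(N-1)*(u s)) ≠ 0 := mul_ne_zero (ne_of_gt (by linarith : (0:ℝ) < 2*(N-1))) hu0
    apply mul_left_cancel₀ h2N
    rw [mul_zero]
    linear_combination (4*(N-1)-A) * (hD2 s ⟨hs, hu0, hL0⟩)
      + N*(4*(N-1)-A)^2 * (hE1 s hs)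
      - (2*(N-1)-A)*(u s) * (hP2 s ⟨hs, hu0, hL0⟩)
  -- the quadratic equation for Λ
  have hQ : ∀ s ∈ V,
      (N-1)*(M * Real.exp ((f s - C₂)/N) - N)^2
        + N*(6*(N-1)-3*A)*(M * Real.exp ((f s - C₂)/N) - N)
        - 3*N^2*(N-1-A) = 0 := by
    rintro s ⟨hs, hu0, hL0⟩
    apply mul_left_cancel₀ (pow_ne_zero 2 hu0)
    rw [mul_zero]
    linear_combination (M * Real.exp ((f s - C₂)/N) - N) * (htdag s ⟨hs, hu0, hL0⟩)
      - 3*N * (hP2 s ⟨hs, hu0, hL0⟩)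
  -- derivative of the quadratic
  have hQd : ∀ s ∈ V,
      (2*(N-1)*(M * Real.exp ((f s - C₂)/N) - N) + N*(6*(N-1)-3*A))
        * (M*Real.exp ((f s - C₂)/N)) * (u s) = 0 := by
    rintro s ⟨hs, hu0, hL0⟩
    have hz : HasDerivAt (fun x =>
        (N-1)*(M * Real.exp ((f x - C₂)/N) - N)^2
          + N*(6*(N-1)-3*A)*(M * Real.exp ((f x - C₂)/N) - N)
          - 3*N^2*(N-1-A)) 0 s := by
      apply (hasDerivAt_const s (0:ℝ)).congr_of_eventuallyEq
      filter_upwards [hVopen.mem_nhds ⟨hs, hu0, hL0⟩] with x hx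
      linear_combination hQ x hx
    have hd : HasDerivAt (fun x =>
        (N-1)*(M * Real.exp ((f x - C₂)/N) - N)^2
          + N*(6*(N-1)-3*A)*(M * Real.exp ((f x - C₂)/N) - N)
          - 3*N^2*(N-1-A))
        (((N-1) * (2 * (M * Real.exp ((f s - C₂)/N) - N) ^ 1
            * (M * (Real.exp ((f s - C₂)/N) * (u s / N)))))
          + (N*(6*(N-1)-3*A)) * (M * (Real.exp ((f s - C₂)/N) * (u s / N)))) s := by
      exact ((((HL s hs).pow 2).const_mul (N-1)).add
        ((HL s hs).const_mul (N*(6*(N-1)-3*A)))).sub_const (3*N^2*(N-1-A))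
    have hkey := hd.unique hz
    linear_combination N * hkey
      - ((2*(N-1)*(M * Real.exp ((f s - C₂)/N) - N) + N*(6*(N-1)-3*A))
          * (M*Real.exp ((f s - C₂)/N)) * (u s)) * hNinv
  -- V is empty
  have hfalse : ∀ s ∈ V, False := by
    rintro s ⟨hs, hu0, hL0⟩
    have hq := hQ s ⟨hs, hu0, hL0⟩
    have hqd := hQd s ⟨hs, hu0, hL0⟩
    have h1 : (2*(N-1)*(M * Real.exp ((f s - C₂)/N) - N) + N*(6*(N-1)-3*A))
        * (M*Real.exp ((f s - C₂)/N)) = 0 := by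
      rcases mul_eq_zero.mp hqd with h | h
      · exact h
      · exact absurd h hu0
    have hNA : (1:ℝ) ≤ N - 1 - A := by linarith
    rcases mul_eq_zero.mp h1 with h2 | h2
    · have key : (N-1)*(M * Real.exp ((f s - C₂)/N) - N)^2 + 3*N^2*(N-1-A) = 0 := by
        linear_combination (M * Real.exp ((f s - C₂)/N) - N) * h2 - hq
      have e1 : 0 ≤ (N-1)*(M * Real.exp ((f s - C₂)/N) - N)^2 :=
        mul_nonneg (by linarith) (sq_nonneg _)
      nlinarith [key, e1, hN3, hNA]
    · have key2 : (N-1)*N^2 - N^2*(6*(N-1)-3*A) - 3*N^2*(N-1-A) = 0 := by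
        linear_combination hq
          - ((N-1)*(M * Real.exp ((f s - C₂)/N) - 2*N) + N*(6*(N-1)-3*A)) * h2
      have h9 : (9:ℝ) ≤ N^2 := by nlinarith
      have h10 : (10:ℝ) ≤ 8*(N-1) - 6*A := by linarith
      nlinarith [key2, h9, h10]
  -- hence u vanishes identically on the interval
  have hu0all : ∀ s ∈ Set.Ioo a b, u s = 0 := by
    intro s hs
    by_contra h0
    rcases eq_or_ne (M * Real.exp ((f s - C₂)/N) - N) 0 with hg | hg
    · have h1 := hE1 s hs
      have h2 := hE2 s hs
      rw [hg] at h1 h2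
      have hcube : (u s)^3 = N * (u s) * (v s) := by linear_combination h1
      have hzero : (N-1-A) * (u s)^2 * (v s) = 0 := by linear_combination -h2
      have hNA : (1:ℝ) ≤ N - 1 - A := by linarith
      rcases mul_eq_zero.mp hzero with h3 | h3
      · rcases mul_eq_zero.mp h3 with h4 | h4
        · linarith
        · exact h0 (sq_eq_zero_iff.mp h4)
      · have : (u s)^3 = 0 := by rw [hcube, h3]; ring
        exact h0 ((pow_eq_zero_iff (three_ne_zero)).mp this)
    · exact hfalse s ⟨hs, h0, hg⟩
  -- conclude that f is constant
  have main : ∀ p q : ℝ, p ∈ Set.Ioo a b → q ∈ Set.Ioo a b → p ≤ q → f q = f p := by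
    intro p q hp hq hpq
    have hsub : Set.Icc p q ⊆ Set.Ioo a b := Set.Icc_subset_Ioo hp.1 hq.2
    exact constant_of_has_deriv_right_zero (hf.continuousOn.mono hsub)
      (fun x hx => by
        have hx' : x ∈ Set.Ioo a b := hsub ⟨hx.1, le_of_lt hx.2⟩
        have hfx := Hf x hx'
        rw [hu0all x hx'] at hfx
        exact hfx.hasDerivWithinAt) q (Set.right_mem_Icc.mpr hpq)
  intro s hs t ht
  rcases le_total s t with h | h
  · exact (main s t hs ht h).symm
  · exact main t s ht hs h
end

section
/- Let n ≥ 4 be an integer and r₁, r₂ ≥ 1 integers with r₁ + r₂ = n − 1, and fix real constants C₁ ≠ 0, C₂, C₃ and μ₁, where in addition μ₁ = 0 in case r₁ = 1. Then any smooth function f on an open interval I ⊆ ℝ satisfying both equations (E1) and (E2) at every point of I must be constant on I. -/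
private lemma deriv_zero_of_eqOn {G : ℝ → ℝ} {U : Set ℝ} (hU : IsOpen U) {s : ℝ}
    (hs : s ∈ U) (h0 : ∀ t ∈ U, G t = 0) {E : ℝ} (hG : HasDerivAt G E s) : E = 0 := by
  have hev : (fun _ : ℝ => (0 : ℝ)) =ᶠ[nhds s] G := by
    filter_upwards [hU.mem_nhds hs] with t ht using (h0 t ht).symm
  exact (hG.congr_of_eventuallyEq hev).unique (hasDerivAt_const s 0)

/-- The core ODE argument, abstracted: if `v, w, u` form a derivative chain, `L`
satisfies `L' = (L+N) v / N`, and the two structure equations hold on an open set,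
then `v` vanishes identically. -/
private lemma key_ode (N r1 r2 B : ℝ) (hN : 3 ≤ N) (hr1 : 1 ≤ r1) (hr2 : 1 ≤ r2)
    (hsum : r1 + r2 = N)
    (v w u L M : ℝ → ℝ) (U : Set ℝ) (hU : IsOpen U)
    (hvw : ∀ s ∈ U, HasDerivAt v (w s) s)
    (hwu : ∀ s ∈ U, HasDerivAt w (u s) s)
    (hLd : ∀ s ∈ U, HasDerivAt L (M s) s)
    (hM : ∀ s ∈ U, N * M s = (L s + N) * v s)
    (hE1 : ∀ s ∈ U, N * u s * L s = N * v s * w s - (v s) ^ 3)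
    (hE2 : ∀ s ∈ U, ((N - 1) * v s * u s - (r1 - 1) * (w s) ^ 2 + B) * L s
      = r2 * (v s) ^ 2 * w s) :
    ∀ s ∈ U, v s = 0 := by
  have hN0 : N ≠ 0 := by linarith
  -- The basic pointwise identity ("star") on all of U.
  have hstar : ∀ s ∈ U, N * (r1 - 1) * ((v s) ^ 2 * w s - (w s) ^ 2 * L s)
      + N * B * L s - (N - 1) * (v s) ^ 4 = 0 := by
    intro s hs
    linear_combination N * hE2 s hs - ((N - 1) * v s) * hE1 s hs
      + (N * (v s) ^ 2 * w s) * hsum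
  intro s₀ hs₀
  by_contra hv0
  -- The open set where v does not vanish.
  set S : Set ℝ := U ∩ v ⁻¹' {(0 : ℝ)}ᶜ with hSdef
  have hSopen : IsOpen S :=
    ContinuousOn.isOpen_inter_preimage
      (fun s hs => (hvw s hs).continuousAt.continuousWithinAt) hU isOpen_compl_singleton
  have hs₀S : s₀ ∈ S := ⟨hs₀, hv0⟩
  have hSv : ∀ {s : ℝ}, s ∈ S → v s ≠ 0 := fun hs => hs.2
  -- On S, L does not vanish.
  have hLne : ∀ s ∈ S, L s ≠ 0 := by
    intro s hs hL0
    have e1 := hE1 s hs.1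
    have e2 := hE2 s hs.1
    rw [hL0, mul_zero] at e1 e2
    have hv := hSv hs
    have hw : w s = 0 := by
      have h2 : r2 * (v s) ^ 2 * w s = 0 := e2.symm
      rcases mul_eq_zero.mp h2 with h | h
      · rcases mul_eq_zero.mp h with h' | h'
        · linarith
        · exact absurd (pow_eq_zero_iff two_ne_zero |>.mp h') hv
      · exact h
    have h3 : (v s) ^ 3 = 0 := by linear_combination e1 + (N * v s) * hw
    exact hv (pow_eq_zero_iff three_ne_zero |>.mp h3)
  -- Differentiate star : second identity on S.
  have hstar2 : ∀ s ∈ S, N * r2 * (v s) ^ 2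
      + L s * ((N * (r1 - 1) - 4 * N * (N - 1)) * w s + (N - 1) * (v s) ^ 2) = 0 := by
    intro s hs
    have Hv := hvw s hs.1
    have Hw := hwu s hs.1
    have HL := hLd s hs.1
    have hD1 := deriv_zero_of_eqOn hU hs.1 hstar
      (((((Hv.pow 2).mul Hw).sub ((Hw.pow 2).mul HL)).const_mul (N * (r1 - 1))).add
        (HL.const_mul (N * B)) |>.sub ((Hv.pow 4).const_mul (N - 1)))
    simp only [Pi.pow_apply] at hD1
    have hcert : (N * r2 * (v s) ^ 2
        + L s * ((N * (r1 - 1) - 4 * N * (N - 1)) * w s + (N - 1) * (v s) ^ 2))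
        * (v s) ^ 3 = 0 := by
      linear_combination (N * L s) * hD1
        + (L s * (N * (r1 - 1) * (w s) ^ 2 - N * B)) * hM s hs.1
        - (N * (r1 - 1) * (v s) ^ 2 - 2 * (N * (r1 - 1)) * w s * L s) * hE1 s hs.1
        - (v s * (L s + N)) * hstar s hs.1 + (N * (v s) ^ 5) * hsum
    rcases mul_eq_zero.mp hcert with h | h
    · exact h
    · exact absurd (pow_eq_zero_iff three_ne_zero |>.mp h) (hSv hs)
  -- Differentiate star2 : the "sharp" identity on S.
  have hsharp : ∀ s ∈ S, L s * w s - 3 * N * w s + 2 * (v s) ^ 2 = 0 := by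
    intro s hs
    have Hv := hvw s hs.1
    have Hw := hwu s hs.1
    have HL := hLd s hs.1
    have hD2 := deriv_zero_of_eqOn hSopen hs hstar2
      (((Hv.pow 2).const_mul (N * r2)).add
        (HL.mul ((Hw.const_mul (N * (r1 - 1) - 4 * N * (N - 1))).add
          ((Hv.pow 2).const_mul (N - 1)))))
    have hcert : (L s * w s - 3 * N * w s + 2 * (v s) ^ 2) * (2 * N * (N - 1) * v s) = 0 := by
      linear_combination N * hD2
        - ((N * (r1 - 1) - 4 * N * (N - 1)) * w s + (N - 1) * (v s) ^ 2) * hM s hs.1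
        - (N * (r1 - 1) - 4 * N * (N - 1)) * hE1 s hs.1
        - (v s) * hstar2 s hs + (v s * (N * (v s) ^ 2 - 2 * N ^ 2 * w s)) * hsum
    have hne : 2 * N * (N - 1) * v s ≠ 0 :=
      mul_ne_zero (by nlinarith) (hSv hs)
    exact (mul_eq_zero.mp hcert).resolve_right hne
  -- Differentiate sharp : the "sharp2" identity on S.
  have hsharp2 : ∀ s ∈ S, (v s) ^ 2 * L s - 8 * N ^ 2 * w s + 5 * N * (v s) ^ 2 = 0 := by
    intro s hs
    have Hv := hvw s hs.1
    have Hw := hwu s hs.1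
    have HL := hLd s hs.1
    have hD3 := deriv_zero_of_eqOn hSopen hs hsharp
      (((HL.mul Hw).sub (Hw.const_mul (3 * N))).add ((Hv.pow 2).const_mul 2))
    have hcert : ((v s) ^ 2 * L s - 8 * N ^ 2 * w s + 5 * N * (v s) ^ 2) * (3 * v s) = 0 := by
      linear_combination (v s * (L s + 9 * N)) * hsharp s hs + (L s - 3 * N) * hE1 s hs.1
        - (N * L s) * hD3 + (L s * w s) * hM s hs.1
    have hne : (3 : ℝ) * v s ≠ 0 := mul_ne_zero three_ne_zero (hSv hs)
    exact (mul_eq_zero.mp hcert).resolve_right hne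
  -- Combining sharp and sharp2 : w = v^2 / (2N) on S.
  have hq : ∀ s ∈ S, 2 * N * w s = (v s) ^ 2 := by
    intro s hs
    have hsq : (2 * N * w s - (v s) ^ 2) ^ 2 = 0 := by
      linear_combination ((v s) ^ 2 / 2) * hsharp s hs - (w s / 2) * hsharp2 s hs
    have := pow_eq_zero_iff two_ne_zero |>.mp hsq
    linarith
  -- L = -N on S.
  have hLv : ∀ s ∈ S, L s = -N := by
    intro s hs
    have h : (v s) ^ 2 * (L s + N) = 0 := by
      linear_combination hsharp2 s hs + 4 * N * hq s hs
    rcases mul_eq_zero.mp h with h' | h'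
    · exact absurd (pow_eq_zero_iff two_ne_zero |>.mp h') (hSv hs)
    · linarith
  -- v^4 is a constant on S.
  have hr1N : r1 ≤ N - 1 := by linarith
  have hKne : 3 * r1 - 4 * N + 1 ≠ 0 := by nlinarith
  have hK : ∀ s ∈ S, (v s) ^ 4 = 4 * N ^ 2 * B / (3 * r1 - 4 * N + 1) := by
    intro s hs
    have hst := hstar s hs.1
    rw [hLv s hs] at hst
    have h4 : (3 * r1 - 4 * N + 1) * (v s) ^ 4 = 4 * N ^ 2 * B := by
      linear_combination 4 * hst - ((r1 - 1) * (2 * N * w s + 3 * (v s) ^ 2)) * hq s hs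
    field_simp
    linarith
  -- Differentiate the constancy of v^4 at s₀ to get a contradiction.
  have Hv := hvw s₀ hs₀
  have hD4 := deriv_zero_of_eqOn hSopen hs₀S
    (fun t ht => by rw [Pi.pow_apply, hK t ht, sub_self])
    ((Hv.pow 4).sub_const (4 * N ^ 2 * B / (3 * r1 - 4 * N + 1)))
  have h5 : (v s₀) ^ 5 = 0 := by
    linear_combination (N / 2) * hD4 - (v s₀) ^ 3 * hq s₀ hs₀S
  exact hv0 (pow_eq_zero_iff (by norm_num : (5 : ℕ) ≠ 0) |>.mp h5)

/-- With n ≥ 4, r₁, r₂ ≥ 1, r₁ + r₂ = n − 1 and fixed constants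
C₁ ≠ 0, C₂, C₃, μ₁ (with μ₁ = 0 when r₁ = 1), any smooth function on an open
interval satisfying both (E1) and (E2) is constant. -/
theorem stmt_2 (n r₁ r₂ : ℕ) (hn : 4 ≤ n) (hr₁ : 1 ≤ r₁) (hr₂ : 1 ≤ r₂)
    (hsum : r₁ + r₂ = n - 1)
    (C₁ C₂ C₃ μ₁ : ℝ) (hC₁ : C₁ ≠ 0) (hμ₁ : r₁ = 1 → μ₁ = 0)
    (a b : ℝ) (hab : a < b) (f : ℝ → ℝ)
    (hf : ContDiffOn ℝ (⊤ : ℕ∞) f (Set.Ioo a b))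
    (hE1 : ∀ s ∈ Set.Ioo a b,
      ((n : ℝ) - 1) * deriv (deriv (deriv f)) s
          * (C₁ * C₃ * Real.exp ((f s - C₂) / ((n : ℝ) - 1)) - ((n : ℝ) - 1))
        = ((n : ℝ) - 1) * deriv f s * deriv (deriv f) s - (deriv f s) ^ 3)
    (hE2 : ∀ s ∈ Set.Ioo a b,
      (((n : ℝ) - 2) * deriv f s * deriv (deriv (deriv f)) s
          - ((r₁ : ℝ) - 1) * (deriv (deriv f) s) ^ 2 + C₁ ^ 2 * μ₁)
          * (C₁ * C₃ * Real.exp ((f s - C₂) / ((n : ℝ) - 1)) - ((n : ℝ) - 1))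
        = (r₂ : ℝ) * (deriv f s) ^ 2 * deriv (deriv f) s) :
    ∀ s ∈ Set.Ioo a b, ∀ t ∈ Set.Ioo a b, f s = f t := by
  have hIo : IsOpen (Set.Ioo a b) := isOpen_Ioo
  have hn4 : (4 : ℝ) ≤ (n : ℝ) := by exact_mod_cast hn
  have hN : (3 : ℝ) ≤ (n : ℝ) - 1 := by linarith
  have hN0 : ((n : ℝ) - 1) ≠ 0 := by linarith
  have hr1R : (1 : ℝ) ≤ (r₁ : ℝ) := by exact_mod_cast hr₁
  have hr2R : (1 : ℝ) ≤ (r₂ : ℝ) := by exact_mod_cast hr₂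
  have hsumR : (r₁ : ℝ) + (r₂ : ℝ) = (n : ℝ) - 1 := by
    have h1 : r₁ + r₂ + 1 = n := by omega
    have h2 : ((r₁ : ℝ) + (r₂ : ℝ) + 1) = (n : ℝ) := by exact_mod_cast h1
    linarith
  -- smoothness of iterated derivatives
  have h1 : ContDiffOn ℝ (⊤ : ℕ∞) (deriv f) (Set.Ioo a b) := hf.deriv_of_isOpen hIo (by simp)
  have h2 : ContDiffOn ℝ (⊤ : ℕ∞) (deriv (deriv f)) (Set.Ioo a b) := h1.deriv_of_isOpen hIo (by simp)
  have hdiffAt : ∀ (g : ℝ → ℝ), ContDiffOn ℝ (⊤ : ℕ∞) g (Set.Ioo a b) →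
      ∀ s ∈ Set.Ioo a b, HasDerivAt g (deriv g s) s := fun g hg s hs =>
    ((hg.differentiableOn (by simp)).differentiableAt (hIo.mem_nhds hs)).hasDerivAt
  have hvw : ∀ s ∈ Set.Ioo a b, HasDerivAt (deriv f) (deriv (deriv f) s) s :=
    hdiffAt (deriv f) h1
  have hwu : ∀ s ∈ Set.Ioo a b, HasDerivAt (deriv (deriv f)) (deriv (deriv (deriv f)) s) s :=
    hdiffAt (deriv (deriv f)) h2
  -- derivative of L
  have hLd : ∀ s ∈ Set.Ioo a b,
      HasDerivAt (fun t => C₁ * C₃ * Real.exp ((f t - C₂) / ((n : ℝ) - 1)) - ((n : ℝ) - 1))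
        (C₁ * C₃ * (Real.exp ((f s - C₂) / ((n : ℝ) - 1)) * (deriv f s / ((n : ℝ) - 1)))) s := by
    intro s hs
    have hdf : HasDerivAt f (deriv f s) s := hdiffAt f hf s hs
    have hexp := ((hdf.sub_const C₂).div_const ((n : ℝ) - 1)).exp
    exact (hexp.const_mul (C₁ * C₃)).sub_const ((n : ℝ) - 1)
  have hM : ∀ s ∈ Set.Ioo a b,
      ((n : ℝ) - 1) * (C₁ * C₃ * (Real.exp ((f s - C₂) / ((n : ℝ) - 1)) * (deriv f s / ((n : ℝ) - 1))))
        = ((C₁ * C₃ * Real.exp ((f s - C₂) / ((n : ℝ) - 1)) - ((n : ℝ) - 1)) + ((n : ℝ) - 1))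
          * deriv f s := by
    intro s hs
    field_simp
    ring
  have hE2' : ∀ s ∈ Set.Ioo a b,
      ((((n : ℝ) - 1) - 1) * deriv f s * deriv (deriv (deriv f)) s
          - ((r₁ : ℝ) - 1) * (deriv (deriv f) s) ^ 2 + C₁ ^ 2 * μ₁)
          * (C₁ * C₃ * Real.exp ((f s - C₂) / ((n : ℝ) - 1)) - ((n : ℝ) - 1))
        = (r₂ : ℝ) * (deriv f s) ^ 2 * deriv (deriv f) s := by
    intro s hs
    linear_combination hE2 s hs
  have hv0 : ∀ s ∈ Set.Ioo a b, deriv f s = 0 :=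
    key_ode ((n : ℝ) - 1) (r₁ : ℝ) (r₂ : ℝ) (C₁ ^ 2 * μ₁) hN hr1R hr2R hsumR
      (deriv f) (deriv (deriv f)) (deriv (deriv (deriv f)))
      (fun t => C₁ * C₃ * Real.exp ((f t - C₂) / ((n : ℝ) - 1)) - ((n : ℝ) - 1))
      (fun t => C₁ * C₃ * (Real.exp ((f t - C₂) / ((n : ℝ) - 1)) * (deriv f t / ((n : ℝ) - 1))))
      (Set.Ioo a b) hIo hvw hwu hLd hM hE1 hE2'
  -- conclude constancy
  intro s hs t ht
  apply (convex_Ioo a b).is_const_of_fderivWithin_eq_zero (hf.differentiableOn (by simp)) _ hs ht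
  intro x hx
  rw [fderivWithin_of_isOpen hIo hx, ← toSpanSingleton_deriv, hv0 x hx]
  ext
  simp
end

section
/- Let n ≥ 4 be an integer, r₁, r₂ ≥ 1 integers with r₁ + r₂ = n − 1, and fix real constants C₁ ≠ 0, C₂, C₃ and μ₁. Suppose a smooth function f on an open interval I ⊆ ℝ satisfies equations (E1) and (E2) at every point of I and f'(s) ≠ 0 for all s ∈ I. Then for all s ∈ I: β₁·f'(s)²·f''(s) + β₃·(f''(s)² − f'(s)·f'''(s)) = β₂·f'(s)⁴ + (n − 1)·β₄, where β₁ = (n − 1)·(3(r₁ − 1) + 4r₂), β₂ = n − 2, β₃ = (n − 1)²·(r₁ − 1) and β₄ = C₁²·(n − 1)·μ₁. -/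
/-- Under (E1), (E2) and f' ≠ 0 on I, equation (wttLamb_2) holds:
β₁·f'²·f'' + β₃·(f''² − f'·f''') = β₂·f'⁴ + (n − 1)·β₄, where
β₁ = (n−1)(3(r₁−1)+4r₂), β₂ = n−2, β₃ = (n−1)²(r₁−1), β₄ = C₁²(n−1)μ₁. -/
theorem stmt_4 (n r₁ r₂ : ℕ) (hn : 4 ≤ n) (hr₁ : 1 ≤ r₁) (hr₂ : 1 ≤ r₂)
    (hsum : r₁ + r₂ = n - 1)
    (C₁ C₂ C₃ μ₁ : ℝ) (hC₁ : C₁ ≠ 0)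
    (a b : ℝ) (hab : a < b) (f : ℝ → ℝ)
    (hf : ContDiffOn ℝ (⊤ : ℕ∞) f (Set.Ioo a b))
    (hf' : ∀ s ∈ Set.Ioo a b, deriv f s ≠ 0)
    (hE1 : ∀ s ∈ Set.Ioo a b,
      ((n : ℝ) - 1) * deriv (deriv (deriv f)) s
          * (C₁ * C₃ * Real.exp ((f s - C₂) / ((n : ℝ) - 1)) - ((n : ℝ) - 1))
        = ((n : ℝ) - 1) * deriv f s * deriv (deriv f) s - (deriv f s) ^ 3)
    (hE2 : ∀ s ∈ Set.Ioo a b,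
      (((n : ℝ) - 2) * deriv f s * deriv (deriv (deriv f)) s
          - ((r₁ : ℝ) - 1) * (deriv (deriv f) s) ^ 2 + C₁ ^ 2 * μ₁)
          * (C₁ * C₃ * Real.exp ((f s - C₂) / ((n : ℝ) - 1)) - ((n : ℝ) - 1))
        = (r₂ : ℝ) * (deriv f s) ^ 2 * deriv (deriv f) s) :
    ∀ s ∈ Set.Ioo a b,
      (((n : ℝ) - 1) * (3 * ((r₁ : ℝ) - 1) + 4 * (r₂ : ℝ)))
          * (deriv f s) ^ 2 * deriv (deriv f) s
        + (((n : ℝ) - 1) ^ 2 * ((r₁ : ℝ) - 1))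
          * ((deriv (deriv f) s) ^ 2 - deriv f s * deriv (deriv (deriv f)) s)
        = ((n : ℝ) - 2) * (deriv f s) ^ 4
          + ((n : ℝ) - 1) * (C₁ ^ 2 * ((n : ℝ) - 1) * μ₁) := by
  intro s hs
  have hIo : IsOpen (Set.Ioo a b) := isOpen_Ioo
  have hn4 : (4:ℝ) ≤ (n:ℝ) := by exact_mod_cast hn
  have hn1 : ((n:ℝ) - 1) ≠ 0 := by linarith
  have hcast : (r₁:ℝ) + (r₂:ℝ) = (n:ℝ) - 1 := by
    have h : ((r₁ + r₂ : ℕ):ℝ) = ((n - 1 : ℕ):ℝ) := by exact congrArg Nat.cast hsum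
    rw [Nat.cast_sub (by omega : 1 ≤ n)] at h
    push_cast at h
    linarith
  -- differentiability
  have hf1 : ContDiffOn ℝ (⊤ : ℕ∞) (deriv f) (Set.Ioo a b) :=
    hf.deriv_of_isOpen hIo (by simp)
  have hf2 : ContDiffOn ℝ (⊤ : ℕ∞) (deriv (deriv f)) (Set.Ioo a b) :=
    hf1.deriv_of_isOpen hIo (by simp)
  have hd0 : ∀ t ∈ Set.Ioo a b, HasDerivAt f (deriv f t) t := fun t ht =>
    ((hf.differentiableOn (by norm_num)).differentiableAt (hIo.mem_nhds ht)).hasDerivAt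
  have hd1 : ∀ t ∈ Set.Ioo a b, HasDerivAt (deriv f) (deriv (deriv f) t) t := fun t ht =>
    ((hf1.differentiableOn (by norm_num)).differentiableAt (hIo.mem_nhds ht)).hasDerivAt
  have hd2 : ∀ t ∈ Set.Ioo a b,
      HasDerivAt (deriv (deriv f)) (deriv (deriv (deriv f)) t) t := fun t ht =>
    ((hf2.differentiableOn (by norm_num)).differentiableAt (hIo.mem_nhds ht)).hasDerivAt
  -- the auxiliary identity (*) : P = Q on Ioo a b
  set P : ℝ → ℝ := fun t =>
    ((n:ℝ) - 1) * (C₁ ^ 2 * μ₁ - ((r₁:ℝ) - 1) * (deriv (deriv f) t) ^ 2) *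
      (C₁ * C₃ * Real.exp ((f t - C₂) / ((n:ℝ) - 1)) - ((n:ℝ) - 1)) with hPdef
  set Q : ℝ → ℝ := fun t =>
    ((n:ℝ) - 2) * (deriv f t) ^ 4 -
      ((n:ℝ) - 1) * ((r₁:ℝ) - 1) * (deriv f t) ^ 2 * deriv (deriv f) t with hQdef
  have hPQ : ∀ t ∈ Set.Ioo a b, P t = Q t := by
    intro t ht
    simp only [hPdef, hQdef]
    linear_combination ((n:ℝ) - 1) * hE2 t ht - ((n:ℝ) - 2) * deriv f t * hE1 t ht +
      ((n:ℝ) - 1) * (deriv f t) ^ 2 * deriv (deriv f) t * hcast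
  -- derivative of the exponential factor
  have hE : HasDerivAt (fun t => Real.exp ((f t - C₂) / ((n:ℝ) - 1)))
      (Real.exp ((f s - C₂) / ((n:ℝ) - 1)) * (deriv f s / ((n:ℝ) - 1))) s :=
    (((hd0 s hs).sub_const C₂).div_const _).exp
  -- derivative of P
  have hu : HasDerivAt
      (fun t => ((n:ℝ) - 1) * (C₁ ^ 2 * μ₁ - ((r₁:ℝ) - 1) * (deriv (deriv f) t) ^ 2))
      (-(((n:ℝ) - 1) * ((r₁:ℝ) - 1) *
        (2 * deriv (deriv f) s * deriv (deriv (deriv f)) s))) s := by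
    have h := ((((hd2 s hs).pow 2).const_mul ((r₁:ℝ) - 1)).const_sub
      (C₁ ^ 2 * μ₁)).const_mul ((n:ℝ) - 1)
    exact h.congr_deriv (by push_cast; ring)
  have hv : HasDerivAt
      (fun t => C₁ * C₃ * Real.exp ((f t - C₂) / ((n:ℝ) - 1)) - ((n:ℝ) - 1))
      (C₁ * C₃ * (Real.exp ((f s - C₂) / ((n:ℝ) - 1)) * (deriv f s / ((n:ℝ) - 1)))) s :=
    (hE.const_mul (C₁ * C₃)).sub_const _
  have hP : HasDerivAt P
      (-(((n:ℝ) - 1) * ((r₁:ℝ) - 1) *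
          (2 * deriv (deriv f) s * deriv (deriv (deriv f)) s)) *
        (C₁ * C₃ * Real.exp ((f s - C₂) / ((n:ℝ) - 1)) - ((n:ℝ) - 1)) +
        ((n:ℝ) - 1) * (C₁ ^ 2 * μ₁ - ((r₁:ℝ) - 1) * (deriv (deriv f) s) ^ 2) *
          (C₁ * C₃ * (Real.exp ((f s - C₂) / ((n:ℝ) - 1)) * (deriv f s / ((n:ℝ) - 1))))) s :=
    hu.mul hv
  -- derivative of Q
  have hQ : HasDerivAt Q
      (((n:ℝ) - 2) * (4 * (deriv f s) ^ 3 * deriv (deriv f) s) -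
        (((n:ℝ) - 1) * ((r₁:ℝ) - 1) *
          (2 * deriv f s * (deriv (deriv f) s) ^ 2 +
            (deriv f s) ^ 2 * deriv (deriv (deriv f)) s))) s := by
    have h1 : HasDerivAt (fun t => ((n:ℝ) - 2) * (deriv f t) ^ 4)
        (((n:ℝ) - 2) * (4 * (deriv f s) ^ 3 * deriv (deriv f) s)) s := by
      have h := ((hd1 s hs).pow 4).const_mul ((n:ℝ) - 2)
      exact h.congr_deriv (by push_cast; ring)
    have h2 : HasDerivAt
        (fun t => ((n:ℝ) - 1) * ((r₁:ℝ) - 1) * (deriv f t) ^ 2 * deriv (deriv f) t)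
        (((n:ℝ) - 1) * ((r₁:ℝ) - 1) *
          (2 * deriv f s * (deriv (deriv f) s) ^ 2 +
            (deriv f s) ^ 2 * deriv (deriv (deriv f)) s)) s := by
      have h := (((hd1 s hs).pow 2).const_mul (((n:ℝ) - 1) * ((r₁:ℝ) - 1))).mul (hd2 s hs)
      exact h.congr_deriv (by push_cast [Pi.pow_apply]; ring)
    exact h1.sub h2
  -- equality of derivatives
  have hPQev : P =ᶠ[nhds s] Q := Filter.eventuallyEq_of_mem (hIo.mem_nhds hs) hPQ
  have heq := hP.unique (hQ.congr_of_eventuallyEq hPQev)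
  -- conclude
  have hA := hE1 s hs
  have hB := hPQ s hs
  simp only [hPdef, hQdef] at hB
  apply mul_left_cancel₀ (hf' s hs)
  field_simp at heq
  linear_combination (-((n:ℝ) - 1) * heq
    - 2 * ((n:ℝ) - 1) * ((r₁:ℝ) - 1) * deriv (deriv f) s * hA
    + deriv f s * hB
    + 4 * ((n:ℝ) - 1) * (deriv f s) ^ 3 * deriv (deriv f) s * hcast)
end

section
/- Let n ≥ 4 be an integer, r₁, r₂ ≥ 1 integers with r₁ + r₂ = n − 1, and fix real constants C₁ ≠ 0, C₂, C₃ and μ₁. Suppose a smooth function f on an open interval I ⊆ ℝ satisfies equations (E1) and (E2) at every point of I and f'(s) ≠ 0 for all s ∈ I. Then for all s ∈ I: 3·β₂·β₃·f''(s)² − 4·(n − 1)·β₂²·f'(s)²·f''(s) + β₂²·f'(s)⁴ + (n − 1)·r₂·β₄ = 0, where β₂ = n − 2, β₃ = (n − 1)²·(r₁ − 1) and β₄ = C₁²·(n − 1)·μ₁. -/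
/-- Under (E1), (E2) and f' ≠ 0 on I, equation (wttLamb_3) holds:
3β₂β₃·f''² − 4(n−1)β₂²·f'²·f'' + β₂²·f'⁴ + (n−1)·r₂·β₄ = 0, where
β₂ = n−2, β₃ = (n−1)²(r₁−1), β₄ = C₁²(n−1)μ₁. -/
theorem stmt_5 (n r₁ r₂ : ℕ) (hn : 4 ≤ n) (hr₁ : 1 ≤ r₁) (hr₂ : 1 ≤ r₂)
    (hsum : r₁ + r₂ = n - 1)
    (C₁ C₂ C₃ μ₁ : ℝ) (hC₁ : C₁ ≠ 0)
    (a b : ℝ) (hab : a < b) (f : ℝ → ℝ)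
    (hf : ContDiffOn ℝ (⊤ : ℕ∞) f (Set.Ioo a b))
    (hf' : ∀ s ∈ Set.Ioo a b, deriv f s ≠ 0)
    (hE1 : ∀ s ∈ Set.Ioo a b,
      ((n : ℝ) - 1) * deriv (deriv (deriv f)) s
          * (C₁ * C₃ * Real.exp ((f s - C₂) / ((n : ℝ) - 1)) - ((n : ℝ) - 1))
        = ((n : ℝ) - 1) * deriv f s * deriv (deriv f) s - (deriv f s) ^ 3)
    (hE2 : ∀ s ∈ Set.Ioo a b,
      (((n : ℝ) - 2) * deriv f s * deriv (deriv (deriv f)) s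
          - ((r₁ : ℝ) - 1) * (deriv (deriv f) s) ^ 2 + C₁ ^ 2 * μ₁)
          * (C₁ * C₃ * Real.exp ((f s - C₂) / ((n : ℝ) - 1)) - ((n : ℝ) - 1))
        = (r₂ : ℝ) * (deriv f s) ^ 2 * deriv (deriv f) s) :
    ∀ s ∈ Set.Ioo a b,
      3 * ((n : ℝ) - 2) * (((n : ℝ) - 1) ^ 2 * ((r₁ : ℝ) - 1)) * (deriv (deriv f) s) ^ 2
        - 4 * ((n : ℝ) - 1) * ((n : ℝ) - 2) ^ 2 * (deriv f s) ^ 2 * deriv (deriv f) s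
        + ((n : ℝ) - 2) ^ 2 * (deriv f s) ^ 4
        + ((n : ℝ) - 1) * (r₂ : ℝ) * (C₁ ^ 2 * ((n : ℝ) - 1) * μ₁) = 0 := by
  have hIo : IsOpen (Set.Ioo a b) := isOpen_Ioo
  have hr : (r₁ : ℝ) + (r₂ : ℝ) = (n : ℝ) - 1 := by
    have h : ((r₁ + r₂ : ℕ) : ℝ) = ((n - 1 : ℕ) : ℝ) := by rw [hsum]
    rw [Nat.cast_sub (by omega)] at h
    push_cast at h ⊢
    linarith
  have hf1 : ContDiffOn ℝ (⊤ : ℕ∞) (deriv f) (Set.Ioo a b) := hf.deriv_of_isOpen hIo (by simp)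
  have hf2 : ContDiffOn ℝ (⊤ : ℕ∞) (deriv (deriv f)) (Set.Ioo a b) := hf1.deriv_of_isOpen hIo (by simp)
  -- the fundamental pointwise identity obtained from (E1) and (E2)
  set g : ℝ → ℝ := fun t =>
    ((n : ℝ) - 1) * (C₁ ^ 2 * μ₁ - ((r₁ : ℝ) - 1) * (deriv (deriv f) t) ^ 2)
        * (C₁ * C₃ * Real.exp ((f t - C₂) / ((n : ℝ) - 1)) - ((n : ℝ) - 1))
      - (((n : ℝ) - 2) * (deriv f t) ^ 4
          - ((n : ℝ) - 1) * ((r₁ : ℝ) - 1) * (deriv f t) ^ 2 * deriv (deriv f) t)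
    with hgdef
  have hg0 : ∀ t ∈ Set.Ioo a b, g t = 0 := by
    intro t ht
    have h1 := hE1 t ht
    have h2 := hE2 t ht
    simp only [hgdef]
    linear_combination ((n : ℝ) - 1) * h2 - ((n : ℝ) - 2) * deriv f t * h1
      + ((n : ℝ) - 1) * (deriv f t) ^ 2 * deriv (deriv f) t * hr
  intro s hs
  have hmem := hIo.mem_nhds hs
  have hdf : HasDerivAt f (deriv f s) s :=
    ((hf.contDiffAt hmem).differentiableAt (by simp)).hasDerivAt
  have hdf1 : HasDerivAt (deriv f) (deriv (deriv f) s) s :=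
    ((hf1.contDiffAt hmem).differentiableAt (by simp)).hasDerivAt
  have hdf2 : HasDerivAt (deriv (deriv f)) (deriv (deriv (deriv f)) s) s :=
    ((hf2.contDiffAt hmem).differentiableAt (by simp)).hasDerivAt
  have h1 := hE1 s hs
  have hA := hg0 s hs
  simp only [hgdef] at hA
  set x := deriv f s with hx
  set y := deriv (deriv f) s with hy
  set z := deriv (deriv (deriv f)) s with hz
  set E := C₁ * C₃ * Real.exp ((f s - C₂) / ((n : ℝ) - 1)) with hE
  -- derivative of g at s
  have hΛ : HasDerivAt
      (fun t => C₁ * C₃ * Real.exp ((f t - C₂) / ((n : ℝ) - 1)) - ((n : ℝ) - 1))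
      (E * (x / ((n : ℝ) - 1))) s := by
    have hin : HasDerivAt (fun t => (f t - C₂) / ((n : ℝ) - 1)) (x / ((n : ℝ) - 1)) s :=
      (hdf.sub_const C₂).div_const _
    have h := ((hin.exp).const_mul (C₁ * C₃)).sub_const ((n : ℝ) - 1)
    refine h.congr_deriv ?_
    rw [hE]; ring
  have hA1 : HasDerivAt
      (fun t => ((n : ℝ) - 1) * (C₁ ^ 2 * μ₁ - ((r₁ : ℝ) - 1) * (deriv (deriv f) t) ^ 2))
      (((n : ℝ) - 1) * (0 - ((r₁ : ℝ) - 1) * (2 * y * z))) s := by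
    have h := (((hdf2.pow 2).const_mul ((r₁ : ℝ) - 1)).const_sub (C₁ ^ 2 * μ₁)).const_mul
      ((n : ℝ) - 1)
    refine h.congr_deriv ?_
    push_cast
    ring
  have hB1 : HasDerivAt
      (fun t => ((n : ℝ) - 2) * (deriv f t) ^ 4
          - ((n : ℝ) - 1) * ((r₁ : ℝ) - 1) * (deriv f t) ^ 2 * deriv (deriv f) t)
      (((n : ℝ) - 2) * (4 * x ^ 3 * y)
        - ((((n : ℝ) - 1) * ((r₁ : ℝ) - 1)) * (2 * x * y) * y
            + (((n : ℝ) - 1) * ((r₁ : ℝ) - 1)) * x ^ 2 * z)) s := by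
    have h4 := (hdf1.pow 4).const_mul ((n : ℝ) - 2)
    have h2y := ((hdf1.pow 2).const_mul (((n : ℝ) - 1) * ((r₁ : ℝ) - 1))).mul hdf2
    have h := h4.sub h2y
    refine h.congr_deriv ?_
    simp only [Pi.pow_apply, ← hx, ← hy]
    push_cast
    ring
  have hgD : HasDerivAt g
      ((((n : ℝ) - 1) * (0 - ((r₁ : ℝ) - 1) * (2 * y * z)))
          * (E - ((n : ℝ) - 1))
        + ((n : ℝ) - 1) * (C₁ ^ 2 * μ₁ - ((r₁ : ℝ) - 1) * y ^ 2) * (E * (x / ((n : ℝ) - 1)))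
        - (((n : ℝ) - 2) * (4 * x ^ 3 * y)
            - ((((n : ℝ) - 1) * ((r₁ : ℝ) - 1)) * (2 * x * y) * y
                + (((n : ℝ) - 1) * ((r₁ : ℝ) - 1)) * x ^ 2 * z))) s :=
    (hA1.mul hΛ).sub hB1
  have hDz : deriv g s = 0 := by
    have heq : g =ᶠ[nhds s] fun _ => (0 : ℝ) := Filter.eventuallyEq_of_mem hmem hg0
    rw [heq.deriv_eq]
    exact deriv_const s 0
  have hD : (((n : ℝ) - 1) * (0 - ((r₁ : ℝ) - 1) * (2 * y * z)))
          * (E - ((n : ℝ) - 1))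
        + ((n : ℝ) - 1) * (C₁ ^ 2 * μ₁ - ((r₁ : ℝ) - 1) * y ^ 2) * (E * (x / ((n : ℝ) - 1)))
        - (((n : ℝ) - 2) * (4 * x ^ 3 * y)
            - ((((n : ℝ) - 1) * ((r₁ : ℝ) - 1)) * (2 * x * y) * y
                + (((n : ℝ) - 1) * ((r₁ : ℝ) - 1)) * x ^ 2 * z)) = 0 := by
    rw [← hgD.deriv]; exact hDz
  have hn4 : (4 : ℝ) ≤ (n : ℝ) := by exact_mod_cast hn
  have hn1 : ((n : ℝ) - 1) ≠ 0 := by linarith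
  have hI : ((n : ℝ) - 1) * ((n : ℝ) - 1)⁻¹ = 1 := mul_inv_cancel₀ hn1
  have hDc : -2 * ((n : ℝ) - 1) ^ 2 * ((r₁ : ℝ) - 1) * y * z * (E - ((n : ℝ) - 1))
      + ((n : ℝ) - 1) * (C₁ ^ 2 * μ₁ - ((r₁ : ℝ) - 1) * y ^ 2) * (E * x)
      - ((n : ℝ) - 1) * (((n : ℝ) - 2) * (4 * x ^ 3 * y)
          - (((n : ℝ) - 1) * ((r₁ : ℝ) - 1) * (2 * x * y ^ 2)
              + ((n : ℝ) - 1) * ((r₁ : ℝ) - 1) * x ^ 2 * z)) = 0 := by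
    linear_combination ((n : ℝ) - 1) * hD
      - ((n : ℝ) - 1) * (C₁ ^ 2 * μ₁ - ((r₁ : ℝ) - 1) * y ^ 2) * E * x * hI
  -- derive (B)
  have hB : (E - ((n : ℝ) - 1))
        * (((n : ℝ) - 1) * ((r₁ : ℝ) - 4 * (n : ℝ) + 7) * y + ((n : ℝ) - 2) * x ^ 2) * x ^ 3
      + ((n : ℝ) - 1) * (r₂ : ℝ) * x ^ 5 = 0 := by
    linear_combination (E - ((n : ℝ) - 1)) * hDc
      - (-2 * ((n : ℝ) - 1) * ((r₁ : ℝ) - 1) * y * (E - ((n : ℝ) - 1))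
          + ((n : ℝ) - 1) * ((r₁ : ℝ) - 1) * x ^ 2) * h1
      - E * x * hA
      + ((n : ℝ) - 1) * x ^ 5 * hr
  -- combine (A) and (B), then cancel x^5
  have hx5 : x ^ 5 ≠ 0 := pow_ne_zero _ (hf' s hs)
  have hfin : x ^ 5 * (3 * ((n : ℝ) - 2) * (((n : ℝ) - 1) ^ 2 * ((r₁ : ℝ) - 1)) * y ^ 2
        - 4 * ((n : ℝ) - 1) * ((n : ℝ) - 2) ^ 2 * x ^ 2 * y
        + ((n : ℝ) - 2) ^ 2 * x ^ 4
        + ((n : ℝ) - 1) * (r₂ : ℝ) * (C₁ ^ 2 * ((n : ℝ) - 1) * μ₁)) = 0 := by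
    linear_combination ((n : ℝ) - 1) * (C₁ ^ 2 * μ₁ - ((r₁ : ℝ) - 1) * y ^ 2) * hB
      - (((n : ℝ) - 1) * ((r₁ : ℝ) - 4 * (n : ℝ) + 7) * y + ((n : ℝ) - 2) * x ^ 2) * x ^ 3 * hA
      + ((n : ℝ) - 1) ^ 2 * ((r₁ : ℝ) - 1) * x ^ 5 * y ^ 2 * hr
  exact (mul_eq_zero.mp hfin).resolve_left hx5
end

section
/- Let n ≥ 4 be an integer, r₁, r₂ ≥ 1 integers with r₁ + r₂ = n − 1, and fix real constants C₁ ≠ 0, C₂, C₃ and μ₁. Suppose a smooth function f on an open interval I ⊆ ℝ satisfies equations (E1) and (E2) at every point of I. Then for all s ∈ I: ((n − 1)·(r₁ − 1)·f''(s)² − C₁²·(n − 1)·μ₁)·Λ(s) = (n − 1)·(r₁ − 1)·f'(s)²·f''(s) − (n − 2)·f'(s)⁴. -/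
/-- Under (E1) and (E2) on I, one has
((n−1)(r₁−1)f''² − C₁²(n−1)μ₁)·Λ = (n−1)(r₁−1)f'²·f'' − (n−2)f'⁴ on I. -/
theorem stmt_6 (n r₁ r₂ : ℕ) (hn : 4 ≤ n) (hr₁ : 1 ≤ r₁) (hr₂ : 1 ≤ r₂)
    (hsum : r₁ + r₂ = n - 1)
    (C₁ C₂ C₃ μ₁ : ℝ) (hC₁ : C₁ ≠ 0)
    (a b : ℝ) (hab : a < b) (f : ℝ → ℝ)
    (hf : ContDiffOn ℝ (⊤ : ℕ∞) f (Set.Ioo a b))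
    (hE1 : ∀ s ∈ Set.Ioo a b,
      ((n : ℝ) - 1) * deriv (deriv (deriv f)) s
          * (C₁ * C₃ * Real.exp ((f s - C₂) / ((n : ℝ) - 1)) - ((n : ℝ) - 1))
        = ((n : ℝ) - 1) * deriv f s * deriv (deriv f) s - (deriv f s) ^ 3)
    (hE2 : ∀ s ∈ Set.Ioo a b,
      (((n : ℝ) - 2) * deriv f s * deriv (deriv (deriv f)) s
          - ((r₁ : ℝ) - 1) * (deriv (deriv f) s) ^ 2 + C₁ ^ 2 * μ₁)
          * (C₁ * C₃ * Real.exp ((f s - C₂) / ((n : ℝ) - 1)) - ((n : ℝ) - 1))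
        = (r₂ : ℝ) * (deriv f s) ^ 2 * deriv (deriv f) s) :
    ∀ s ∈ Set.Ioo a b,
      (((n : ℝ) - 1) * ((r₁ : ℝ) - 1) * (deriv (deriv f) s) ^ 2
          - C₁ ^ 2 * ((n : ℝ) - 1) * μ₁)
          * (C₁ * C₃ * Real.exp ((f s - C₂) / ((n : ℝ) - 1)) - ((n : ℝ) - 1))
        = ((n : ℝ) - 1) * ((r₁ : ℝ) - 1) * (deriv f s) ^ 2 * deriv (deriv f) s
          - ((n : ℝ) - 2) * (deriv f s) ^ 4 := by
  intro s hs
  have e1 := hE1 s hs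
  have e2 := hE2 s hs
  have hcast : (r₁ : ℝ) + (r₂ : ℝ) = (n : ℝ) - 1 := by
    have h : r₁ + r₂ + 1 = n := by omega
    have := congrArg (fun k : ℕ => (k : ℝ)) h
    push_cast at this
    linarith
  linear_combination (-(((n:ℝ)-1))) * e2 + (((n:ℝ)-2) * deriv f s) * e1
    + (-(((n:ℝ)-1)) * (deriv f s)^2 * deriv (deriv f) s) * hcast
end

section
/- Assume the two-fiber soliton system (T1)–(T3) on I, write a = h₁'/h₁ and b = h₂'/h₂, and assume the harmonic Weyl condition a' + a² = b' + b² on I (equivalently h₁''/h₁ = h₂''/h₂) together with a(s) ≠ b(s) for every s ∈ I. Then for all s ∈ I: λ(s) = −a'(s) − r₁·a(s)² − b'(s) − r₂·b(s)² + μ₁/h₁(s)² + μ₂/h₂(s)². -/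
/-- On an open interval, a `C^∞` function is differentiable at each point and
its derivative is differentiable at each point. -/
lemma stmt10_diff_aux {g : ℝ → ℝ} {a b : ℝ} (hg : ContDiffOn ℝ (⊤ : ℕ∞) g (Set.Ioo a b))
    {s : ℝ} (hs : s ∈ Set.Ioo a b) :
    DifferentiableAt ℝ g s ∧ DifferentiableAt ℝ (deriv g) s := by
  have hopen : IsOpen (Set.Ioo a b) := isOpen_Ioo
  have hmem : Set.Ioo a b ∈ nhds s := hopen.mem_nhds hs
  constructor
  · exact (hg.differentiableOn (by simp)).differentiableAt hmem
  · have hd : ContDiffOn ℝ (⊤ : ℕ∞) (deriv g) (Set.Ioo a b) :=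
      hg.deriv_of_isOpen hopen (by simp)
    exact (hd.differentiableOn (by simp)).differentiableAt hmem

/-- For the two-fiber soliton system (T1)–(T3), with a = h₁'/h₁,
b = h₂'/h₂, harmonic Weyl condition a' + a² = b' + b², and a ≠ b on I, one has
λ = −a' − r₁·a² − b' − r₂·b² + μ₁/h₁² + μ₂/h₂² on I. -/
theorem stmt_10 (r₁ r₂ n : ℕ) (hr₁ : 1 ≤ r₁) (hr₂ : 1 ≤ r₂)
    (hn : n = r₁ + r₂ + 1) (hn4 : 4 ≤ n)
    (a b : ℝ) (hab : a < b)
    (h₁ h₂ f lam : ℝ → ℝ) (μ₁ μ₂ : ℝ)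
    (hh₁ : ContDiffOn ℝ (⊤ : ℕ∞) h₁ (Set.Ioo a b)) (hh₂ : ContDiffOn ℝ (⊤ : ℕ∞) h₂ (Set.Ioo a b))
    (hfs : ContDiffOn ℝ (⊤ : ℕ∞) f (Set.Ioo a b)) (hlams : ContDiffOn ℝ (⊤ : ℕ∞) lam (Set.Ioo a b))
    (hpos₁ : ∀ s ∈ Set.Ioo a b, 0 < h₁ s) (hpos₂ : ∀ s ∈ Set.Ioo a b, 0 < h₂ s)
    (hT1 : ∀ s ∈ Set.Ioo a b,
      lam s = deriv (deriv f) s - (r₁ : ℝ) * deriv (deriv h₁) s / h₁ s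
        - (r₂ : ℝ) * deriv (deriv h₂) s / h₂ s)
    (hT2 : ∀ s ∈ Set.Ioo a b,
      lam s = μ₁ / (h₁ s) ^ 2 + (deriv h₁ s / h₁ s) * deriv f s
        - deriv (deriv h₁) s / h₁ s - ((r₁ : ℝ) - 1) * (deriv h₁ s) ^ 2 / (h₁ s) ^ 2
        - (r₂ : ℝ) * (deriv h₁ s * deriv h₂ s) / (h₁ s * h₂ s))
    (hT3 : ∀ s ∈ Set.Ioo a b,
      lam s = μ₂ / (h₂ s) ^ 2 + (deriv h₂ s / h₂ s) * deriv f s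
        - deriv (deriv h₂) s / h₂ s - ((r₂ : ℝ) - 1) * (deriv h₂ s) ^ 2 / (h₂ s) ^ 2
        - (r₁ : ℝ) * (deriv h₁ s * deriv h₂ s) / (h₁ s * h₂ s))
    (hharm : ∀ s ∈ Set.Ioo a b,
      deriv (fun t => deriv h₁ t / h₁ t) s + (deriv h₁ s / h₁ s) ^ 2
        = deriv (fun t => deriv h₂ t / h₂ t) s + (deriv h₂ s / h₂ s) ^ 2)
    (hneq : ∀ s ∈ Set.Ioo a b, deriv h₁ s / h₁ s ≠ deriv h₂ s / h₂ s) :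
    ∀ s ∈ Set.Ioo a b,
      lam s = -deriv (fun t => deriv h₁ t / h₁ t) s - (r₁ : ℝ) * (deriv h₁ s / h₁ s) ^ 2
        - deriv (fun t => deriv h₂ t / h₂ t) s - (r₂ : ℝ) * (deriv h₂ s / h₂ s) ^ 2
        + μ₁ / (h₁ s) ^ 2 + μ₂ / (h₂ s) ^ 2 := by
  -- pointwise derivative formulas for a = h₁'/h₁ and b = h₂'/h₂
  have hderivA : ∀ t ∈ Set.Ioo a b,
      deriv (fun u => deriv h₁ u / h₁ u) t
        = (deriv (deriv h₁) t * h₁ t - deriv h₁ t * deriv h₁ t) / h₁ t ^ 2 := by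
    intro t ht
    exact (((stmt10_diff_aux hh₁ ht).2.hasDerivAt).div
      ((stmt10_diff_aux hh₁ ht).1.hasDerivAt) (hpos₁ t ht).ne').deriv
  have hderivB : ∀ t ∈ Set.Ioo a b,
      deriv (fun u => deriv h₂ u / h₂ u) t
        = (deriv (deriv h₂) t * h₂ t - deriv h₂ t * deriv h₂ t) / h₂ t ^ 2 := by
    intro t ht
    exact (((stmt10_diff_aux hh₂ ht).2.hasDerivAt).div
      ((stmt10_diff_aux hh₂ ht).1.hasDerivAt) (hpos₂ t ht).ne').deriv
  -- the harmonic Weyl condition means h₁''/h₁ = h₂''/h₂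
  have hQ : ∀ t ∈ Set.Ioo a b,
      deriv (deriv h₁) t / h₁ t = deriv (deriv h₂) t / h₂ t := by
    intro t ht
    have h1ne : h₁ t ≠ 0 := (hpos₁ t ht).ne'
    have h2ne : h₂ t ≠ 0 := (hpos₂ t ht).ne'
    have k1 : deriv (deriv h₁) t / h₁ t
        = deriv (fun u => deriv h₁ u / h₁ u) t + (deriv h₁ t / h₁ t) ^ 2 := by
      rw [hderivA t ht]; field_simp; ring
    have k2 : deriv (deriv h₂) t / h₂ t
        = deriv (fun u => deriv h₂ u / h₂ u) t + (deriv h₂ t / h₂ t) ^ 2 := by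
      rw [hderivB t ht]; field_simp; ring
    rw [k1, k2]; exact hharm t ht
  -- the auxiliary function G (difference of (T2) and (T3) after using hQ) vanishes on I
  have hG0 : ∀ t ∈ Set.Ioo a b,
      (μ₁ / h₁ t ^ 2 - μ₂ / h₂ t ^ 2
        + (deriv h₁ t / h₁ t - deriv h₂ t / h₂ t) * deriv f t
        - ((r₁ : ℝ) - 1) * (deriv h₁ t / h₁ t) ^ 2
        + ((r₂ : ℝ) - 1) * (deriv h₂ t / h₂ t) ^ 2
        - ((r₂ : ℝ) - (r₁ : ℝ)) * ((deriv h₁ t / h₁ t) * (deriv h₂ t / h₂ t))) = 0 := by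
    intro t ht
    linear_combination hT3 t ht - hT2 t ht + hQ t ht
  intro s hs
  have hmem : Set.Ioo a b ∈ nhds s := isOpen_Ioo.mem_nhds hs
  have h1ne : h₁ s ≠ 0 := (hpos₁ s hs).ne'
  have h2ne : h₂ s ≠ 0 := (hpos₂ s hs).ne'
  obtain ⟨h1d, h1d2⟩ := stmt10_diff_aux hh₁ hs
  obtain ⟨h2d, h2d2⟩ := stmt10_diff_aux hh₂ hs
  obtain ⟨hfd, hfd2⟩ := stmt10_diff_aux hfs hs
  have hd1 : HasDerivAt h₁ (deriv h₁ s) s := h1d.hasDerivAt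
  have hd1' : HasDerivAt (deriv h₁) (deriv (deriv h₁) s) s := h1d2.hasDerivAt
  have hd2 : HasDerivAt h₂ (deriv h₂ s) s := h2d.hasDerivAt
  have hd2' : HasDerivAt (deriv h₂) (deriv (deriv h₂) s) s := h2d2.hasDerivAt
  have hdf' : HasDerivAt (deriv f) (deriv (deriv f) s) s := hfd2.hasDerivAt
  -- derivatives of a and b, with their nice values
  have hAd : HasDerivAt (fun t => deriv h₁ t / h₁ t)
      (deriv (fun t => deriv h₁ t / h₁ t) s) s :=
    ((hd1'.div hd1 h1ne)).differentiableAt.hasDerivAt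
  have hBd : HasDerivAt (fun t => deriv h₂ t / h₂ t)
      (deriv (fun t => deriv h₂ t / h₂ t) s) s :=
    ((hd2'.div hd2 h2ne)).differentiableAt.hasDerivAt
  have e5 : deriv (fun t => deriv h₁ t / h₁ t) s
      = deriv (deriv h₁) s / h₁ s - (deriv h₁ s / h₁ s) ^ 2 := by
    rw [hderivA s hs]; field_simp
  have e6 : deriv (fun t => deriv h₂ t / h₂ t) s
      = deriv (deriv h₂) s / h₂ s - (deriv h₂ s / h₂ s) ^ 2 := by
    rw [hderivB s hs]; field_simp
  -- derivatives of the μ-terms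
  have hM1 : HasDerivAt (fun t => μ₁ / h₁ t ^ 2)
      (-(2 * (μ₁ / h₁ s ^ 2) * (deriv h₁ s / h₁ s))) s := by
    have h := (hasDerivAt_const s μ₁).div (hd1.pow 2) (pow_ne_zero 2 h1ne)
    refine h.congr_deriv ?_
    simp only [Pi.pow_apply]
    field_simp
    ring
  have hM2 : HasDerivAt (fun t => μ₂ / h₂ t ^ 2)
      (-(2 * (μ₂ / h₂ s ^ 2) * (deriv h₂ s / h₂ s))) s := by
    have h := (hasDerivAt_const s μ₂).div (hd2.pow 2) (pow_ne_zero 2 h2ne)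
    refine h.congr_deriv ?_
    simp only [Pi.pow_apply]
    field_simp
    ring
  -- derivative of G at s
  have hGder : HasDerivAt (fun t => μ₁ / h₁ t ^ 2 - μ₂ / h₂ t ^ 2
        + (deriv h₁ t / h₁ t - deriv h₂ t / h₂ t) * deriv f t
        - ((r₁ : ℝ) - 1) * (deriv h₁ t / h₁ t) ^ 2
        + ((r₂ : ℝ) - 1) * (deriv h₂ t / h₂ t) ^ 2
        - ((r₂ : ℝ) - (r₁ : ℝ)) * ((deriv h₁ t / h₁ t) * (deriv h₂ t / h₂ t)))
      (-(2 * (μ₁ / h₁ s ^ 2) * (deriv h₁ s / h₁ s))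
        - -(2 * (μ₂ / h₂ s ^ 2) * (deriv h₂ s / h₂ s))
        + ((deriv (fun t => deriv h₁ t / h₁ t) s - deriv (fun t => deriv h₂ t / h₂ t) s)
            * deriv f s
          + (deriv h₁ s / h₁ s - deriv h₂ s / h₂ s) * deriv (deriv f) s)
        - ((r₁ : ℝ) - 1) * (2 * (deriv h₁ s / h₁ s) * deriv (fun t => deriv h₁ t / h₁ t) s)
        + ((r₂ : ℝ) - 1) * (2 * (deriv h₂ s / h₂ s) * deriv (fun t => deriv h₂ t / h₂ t) s)
        - ((r₂ : ℝ) - (r₁ : ℝ)) * (deriv (fun t => deriv h₁ t / h₁ t) s * (deriv h₂ s / h₂ s)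
            + (deriv h₁ s / h₁ s) * deriv (fun t => deriv h₂ t / h₂ t) s)) s := by
    have h := ((((hM1.sub hM2).add ((hAd.sub hBd).mul hdf')).sub
        ((hAd.pow 2).const_mul ((r₁ : ℝ) - 1))).add
        ((hBd.pow 2).const_mul ((r₂ : ℝ) - 1))).sub
        ((hAd.mul hBd).const_mul ((r₂ : ℝ) - (r₁ : ℝ)))
    refine h.congr_deriv ?_
    simp only [Pi.sub_apply]
    push_cast
    ring
  -- G is constantly 0 near s, so its derivative at s is 0
  have e7 : (-(2 * (μ₁ / h₁ s ^ 2) * (deriv h₁ s / h₁ s))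
        - -(2 * (μ₂ / h₂ s ^ 2) * (deriv h₂ s / h₂ s))
        + ((deriv (fun t => deriv h₁ t / h₁ t) s - deriv (fun t => deriv h₂ t / h₂ t) s)
            * deriv f s
          + (deriv h₁ s / h₁ s - deriv h₂ s / h₂ s) * deriv (deriv f) s)
        - ((r₁ : ℝ) - 1) * (2 * (deriv h₁ s / h₁ s) * deriv (fun t => deriv h₁ t / h₁ t) s)
        + ((r₂ : ℝ) - 1) * (2 * (deriv h₂ s / h₂ s) * deriv (fun t => deriv h₂ t / h₂ t) s)
        - ((r₂ : ℝ) - (r₁ : ℝ)) * (deriv (fun t => deriv h₁ t / h₁ t) s * (deriv h₂ s / h₂ s)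
            + (deriv h₁ s / h₁ s) * deriv (fun t => deriv h₂ t / h₂ t) s)) = 0 := by
    have hev : (fun t => μ₁ / h₁ t ^ 2 - μ₂ / h₂ t ^ 2
        + (deriv h₁ t / h₁ t - deriv h₂ t / h₂ t) * deriv f t
        - ((r₁ : ℝ) - 1) * (deriv h₁ t / h₁ t) ^ 2
        + ((r₂ : ℝ) - 1) * (deriv h₂ t / h₂ t) ^ 2
        - ((r₂ : ℝ) - (r₁ : ℝ)) * ((deriv h₁ t / h₁ t) * (deriv h₂ t / h₂ t)))
        =ᶠ[nhds s] (fun _ => (0 : ℝ)) :=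
      Filter.eventuallyEq_of_mem hmem (fun t ht => hG0 t ht)
    rw [← hGder.deriv, hev.deriv_eq]
    simp
  -- the key identity λ = (a+b) f' − (r₁+r₂) a b
  have eneq : deriv h₁ s / h₁ s - deriv h₂ s / h₂ s ≠ 0 :=
    sub_ne_zero.mpr (hneq s hs)
  have hfac : (deriv h₁ s / h₁ s - deriv h₂ s / h₂ s)
      * (lam s - ((deriv h₁ s / h₁ s + deriv h₂ s / h₂ s) * deriv f s
        - ((r₁ : ℝ) + (r₂ : ℝ)) * ((deriv h₁ s / h₁ s) * (deriv h₂ s / h₂ s)))) = 0 := by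
    linear_combination (-1 : ℝ) * e7
      + 2 * (deriv h₁ s / h₁ s) * hT2 s hs
      - 2 * (deriv h₂ s / h₂ s) * hT3 s hs
      - (deriv h₁ s / h₁ s - deriv h₂ s / h₂ s) * hT1 s hs
      - ((r₁ : ℝ) * (deriv h₁ s / h₁ s - deriv h₂ s / h₂ s) - 2 * (deriv h₁ s / h₁ s)) * e5
      - (2 * (deriv h₂ s / h₂ s)
          + (r₂ : ℝ) * (deriv h₁ s / h₁ s - deriv h₂ s / h₂ s)) * e6
      - ((r₁ : ℝ) * (deriv h₁ s / h₁ s) + (r₂ : ℝ) * (deriv h₂ s / h₂ s) - deriv f s)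
          * hharm s hs
  have hkey : lam s = (deriv h₁ s / h₁ s + deriv h₂ s / h₂ s) * deriv f s
      - ((r₁ : ℝ) + (r₂ : ℝ)) * ((deriv h₁ s / h₁ s) * (deriv h₂ s / h₂ s)) :=
    sub_eq_zero.mp ((mul_eq_zero.mp hfac).resolve_left eneq)
  -- conclude
  linear_combination hT2 s hs + hT3 s hs - hkey + e5 + e6
end

section
/- Assume the one-fiber soliton system (S1)–(S2) on I. Then the quotient f'/h satisfies, for all s ∈ I, (f'/h)'(s) = (μ + (n − 2)·(h(s)·h''(s) − h'(s)²))/h(s)³. -/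
/-- Under the one-fiber soliton system (S1)–(S2) on I,
(f'/h)'(s) = (μ + (n−2)·(h·h'' − (h')²))/h³ for all s ∈ I. -/
theorem stmt_11 (n : ℕ) (hn : 3 ≤ n)
    (a b : ℝ) (hab : a < b)
    (h f lam : ℝ → ℝ) (μ : ℝ)
    (hh : ContDiffOn ℝ (⊤ : ℕ∞) h (Set.Ioo a b))
    (hfs : ContDiffOn ℝ (⊤ : ℕ∞) f (Set.Ioo a b))
    (hlams : ContDiffOn ℝ (⊤ : ℕ∞) lam (Set.Ioo a b))
    (hpos : ∀ s ∈ Set.Ioo a b, 0 < h s)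
    (hS1 : ∀ s ∈ Set.Ioo a b,
      lam s = deriv (deriv f) s - ((n : ℝ) - 1) * deriv (deriv h) s / h s)
    (hS2 : ∀ s ∈ Set.Ioo a b,
      lam s = deriv f s * deriv h s / h s + μ / (h s) ^ 2
        - deriv (deriv h) s / h s - ((n : ℝ) - 2) * (deriv h s) ^ 2 / (h s) ^ 2) :
    ∀ s ∈ Set.Ioo a b,
      deriv (fun t => deriv f t / h t) s
        = (μ + ((n : ℝ) - 2) * (h s * deriv (deriv h) s - (deriv h s) ^ 2)) / (h s) ^ 3 := by
  intro s hs
  have hso : IsOpen (Set.Ioo a b) := isOpen_Ioo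
  have hns := hso.mem_nhds hs
  have hne : h s ≠ 0 := (hpos s hs).ne'
  have hdf : ContDiffOn ℝ (⊤ : ℕ∞) (deriv f) (Set.Ioo a b) := hfs.deriv_of_isOpen hso (by simp)
  have h1 : DifferentiableAt ℝ (deriv f) s :=
    ((hdf.differentiableOn (by simp)) s hs).differentiableAt hns
  have h2 : DifferentiableAt ℝ h s :=
    ((hh.differentiableOn (by simp)) s hs).differentiableAt hns
  rw [deriv_fun_div h1 h2 hne]
  have key := (hS1 s hs).symm.trans (hS2 s hs)
  field_simp at key
  have key2 : deriv (deriv f) s * h s ^ 2 - deriv f s * deriv h s * h s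
      = μ + ((n : ℝ) - 2) * (h s * deriv (deriv h) s - deriv h s ^ 2) := by
    have hp : h s ^ 5 ≠ 0 := pow_ne_zero _ hne
    apply mul_left_cancel₀ hp
    linear_combination h s ^ 5 * key
  field_simp
  linear_combination key2
end

section
/- Assume the one-fiber soliton system (S1)–(S2) on I and that h'(s) ≠ 0 for all s ∈ I. Then for all s ∈ I: h·(λ/h')' = (n − 1)·h''/h + μ·(1/(h·h'))' − (h''/h')' − (n − 2)·(h'/h)'. -/
/-- Under the one-fiber soliton system (S1)–(S2) on I with h' ≠ 0,
h·(λ/h')' = (n−1)·h''/h + μ·(1/(h·h'))' − (h''/h')' − (n−2)·(h'/h)' on I. -/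
theorem stmt_12 (n : ℕ) (hn : 3 ≤ n)
    (a b : ℝ) (hab : a < b)
    (h f lam : ℝ → ℝ) (μ : ℝ)
    (hh : ContDiffOn ℝ (⊤ : ℕ∞) h (Set.Ioo a b))
    (hfs : ContDiffOn ℝ (⊤ : ℕ∞) f (Set.Ioo a b))
    (hlams : ContDiffOn ℝ (⊤ : ℕ∞) lam (Set.Ioo a b))
    (hpos : ∀ s ∈ Set.Ioo a b, 0 < h s)
    (hh' : ∀ s ∈ Set.Ioo a b, deriv h s ≠ 0)
    (hS1 : ∀ s ∈ Set.Ioo a b,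
      lam s = deriv (deriv f) s - ((n : ℝ) - 1) * deriv (deriv h) s / h s)
    (hS2 : ∀ s ∈ Set.Ioo a b,
      lam s = deriv f s * deriv h s / h s + μ / (h s) ^ 2
        - deriv (deriv h) s / h s - ((n : ℝ) - 2) * (deriv h s) ^ 2 / (h s) ^ 2) :
    ∀ s ∈ Set.Ioo a b,
      h s * deriv (fun t => lam t / deriv h t) s
        = ((n : ℝ) - 1) * deriv (deriv h) s / h s
          + μ * deriv (fun t => 1 / (h t * deriv h t)) s
          - deriv (fun t => deriv (deriv h) t / deriv h t) s
          - ((n : ℝ) - 2) * deriv (fun t => deriv h t / h t) s := by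
  intro s hs
  have hopen : IsOpen (Set.Ioo a b) := isOpen_Ioo
  have hnhds : Set.Ioo a b ∈ nhds s := hopen.mem_nhds hs
  -- smoothness of derivatives
  have hh1 : ContDiffOn ℝ (⊤ : ℕ∞) (deriv h) (Set.Ioo a b) :=
    hh.deriv_of_isOpen hopen (by simp)
  have hh2 : ContDiffOn ℝ (⊤ : ℕ∞) (deriv (deriv h)) (Set.Ioo a b) :=
    hh1.deriv_of_isOpen hopen (by simp)
  have hf1 : ContDiffOn ℝ (⊤ : ℕ∞) (deriv f) (Set.Ioo a b) :=
    hfs.deriv_of_isOpen hopen (by simp)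
  -- differentiability at s
  have Hh : DifferentiableAt ℝ h s :=
    ((hh.differentiableOn (by simp)).differentiableAt hnhds)
  have Hh1 : DifferentiableAt ℝ (deriv h) s :=
    ((hh1.differentiableOn (by simp)).differentiableAt hnhds)
  have Hh2 : DifferentiableAt ℝ (deriv (deriv h)) s :=
    ((hh2.differentiableOn (by simp)).differentiableAt hnhds)
  have Hf1 : DifferentiableAt ℝ (deriv f) s :=
    ((hf1.differentiableOn (by simp)).differentiableAt hnhds)
  have hne : h s ≠ 0 := ne_of_gt (hpos s hs)
  have h'ne : deriv h s ≠ 0 := hh' s hs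
  -- building blocks
  have hBd : DifferentiableAt ℝ (fun t => 1 / (h t * deriv h t)) s :=
    (differentiableAt_const 1).div (Hh.mul Hh1) (mul_ne_zero hne h'ne)
  have hCd : DifferentiableAt ℝ (fun t => deriv (deriv h) t / deriv h t) s :=
    Hh2.div Hh1 h'ne
  have hDd : DifferentiableAt ℝ (fun t => deriv h t / h t) s :=
    Hh1.div Hh hne
  have hB : HasDerivAt (fun t => 1 / (h t * deriv h t))
      (deriv (fun t => 1 / (h t * deriv h t)) s) s := hBd.hasDerivAt
  have hC : HasDerivAt (fun t => deriv (deriv h) t / deriv h t)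
      (deriv (fun t => deriv (deriv h) t / deriv h t) s) s := hCd.hasDerivAt
  have hD : HasDerivAt (fun t => deriv h t / h t)
      (deriv (fun t => deriv h t / h t) s) s := hDd.hasDerivAt
  set B' := deriv (fun t => 1 / (h t * deriv h t)) s with hB'def
  set C' := deriv (fun t => deriv (deriv h) t / deriv h t) s with hC'def
  set D' := deriv (fun t => deriv h t / h t) s with hD'def
  have hE : HasDerivAt (fun t => μ * (1 / (h t * deriv h t))
      - deriv (deriv h) t / deriv h t - ((n : ℝ) - 2) * (deriv h t / h t))
      (μ * B' - C' - ((n : ℝ) - 2) * D') s :=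
    ((hB.const_mul μ).sub hC).sub (hD.const_mul _)
  have hinv : HasDerivAt (fun t => 1 / h t)
      ((0 * h s - 1 * deriv h s) / (h s) ^ 2) s :=
    (hasDerivAt_const s 1).div Hh.hasDerivAt hne
  have hprod : HasDerivAt (fun t => (1 / h t) * (μ * (1 / (h t * deriv h t))
      - deriv (deriv h) t / deriv h t - ((n : ℝ) - 2) * (deriv h t / h t)))
      ((0 * h s - 1 * deriv h s) / (h s) ^ 2 * (μ * (1 / (h s * deriv h s))
        - deriv (deriv h) s / deriv h s - ((n : ℝ) - 2) * (deriv h s / h s))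
       + (1 / h s) * (μ * B' - C' - ((n : ℝ) - 2) * D')) s := hinv.mul hE
  have hA : HasDerivAt (fun t => deriv f t / h t)
      ((deriv (deriv f) s * h s - deriv f s * deriv h s) / (h s) ^ 2) s :=
    Hf1.hasDerivAt.div Hh.hasDerivAt hne
  have hFull := hA.add hprod
  -- the key pointwise identity from (S2)
  have heq : (fun t => lam t / deriv h t) =ᶠ[nhds s]
      (fun t => deriv f t / h t + (1 / h t) * (μ * (1 / (h t * deriv h t))
        - deriv (deriv h) t / deriv h t - ((n : ℝ) - 2) * (deriv h t / h t))) := by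
    filter_upwards [hnhds] with t ht
    have h1 : h t ≠ 0 := ne_of_gt (hpos t ht)
    have h2 : deriv h t ≠ 0 := hh' t ht
    rw [hS2 t ht]
    field_simp
    ring
  have hderiv : deriv (fun t => lam t / deriv h t) s
      = (deriv (deriv f) s * h s - deriv f s * deriv h s) / (h s) ^ 2
        + ((0 * h s - 1 * deriv h s) / (h s) ^ 2 * (μ * (1 / (h s * deriv h s))
        - deriv (deriv h) s / deriv h s - ((n : ℝ) - 2) * (deriv h s / h s))
       + (1 / h s) * (μ * B' - C' - ((n : ℝ) - 2) * D')) :=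
    (hFull.congr_of_eventuallyEq heq).deriv
  rw [hderiv]
  have e1 := hS1 s hs
  have e2 := hS2 s hs
  have e3 : deriv (deriv f) s = lam s + ((n : ℝ) - 1) * deriv (deriv h) s / h s := by
    rw [e1]; ring
  rw [e3, e2]
  field_simp
  ring
end

section
/- With the data of the multiply warped example (k ≥ 2; positive integers r₁,…,r_k; n, C, L, ε, I; functions h₁,…,h_k, f, λ as defined), for every s ∈ I one has f''(s) − Σ_{j=1}^{k} r_j·h_j''(s)/h_j(s) = λ(s). -/
/-!
With `m = n - 1 = Σ rⱼ`, `aⱼ = j - C/m` and `T = tan (L s)`, one has `f' = L T`, so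
`f'' = L² / cos² (L s)`, while `hⱼ'/hⱼ = aⱼ + L T / m`, so by the Riccati identity
`hⱼ''/hⱼ = (aⱼ + L T / m)² + L² / (m cos² (L s))`. The weights `rⱼ` centre the `aⱼ`
(`Σ rⱼ aⱼ = 0`) and `Σ rⱼ aⱼ² = L² / m`, so the `rⱼ`-weighted sum of the `hⱼ''/hⱼ` is
`L² (1 + T²) / m + L² / cos² (L s) = L² / (m cos² (L s)) + f''`.
-/

open Real Filter Topology Set

lemma Finset.sum_mul_sub_weightedMean_add_sq {ι : Type*} (s : Finset ι) (w x : ι → ℝ) (b : ℝ)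
    (hw : ∑ i ∈ s, w i ≠ 0) :
    ∑ i ∈ s, w i * (x i - (∑ i ∈ s, w i * x i) / (∑ i ∈ s, w i) + b) ^ 2
      = ∑ i ∈ s, w i * x i ^ 2 - (∑ i ∈ s, w i * x i) ^ 2 / (∑ i ∈ s, w i)
        + (∑ i ∈ s, w i) * b ^ 2 := by
  have hexpand : ∀ μ, ∀ i ∈ s, w i * (x i - μ + b) ^ 2
      = w i * x i ^ 2 + 2 * (b - μ) * (w i * x i) + (b - μ) ^ 2 * w i := fun _ _ _ => by ring
  rw [Finset.sum_congr rfl (hexpand _), Finset.sum_add_distrib, Finset.sum_add_distrib,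
    ← Finset.mul_sum, ← Finset.mul_sum]
  field_simp
  ring

lemma deriv_deriv_eq_of_eventually_hasDerivAt {F φ : ℝ → ℝ} {s φ' : ℝ}
    (hF : ∀ᶠ u in 𝓝 s, HasDerivAt F (φ u) u) (hφ : HasDerivAt φ φ' s) :
    deriv (deriv F) s = φ' := by
  have hF' : deriv F =ᶠ[𝓝 s] φ := hF.mono fun _ hu => hu.deriv
  rw [hF'.deriv_eq]
  exact hφ.deriv

lemma deriv_deriv_div_eq_of_eventually_hasDerivAt_mul {H g : ℝ → ℝ} {s g' : ℝ}
    (hH : ∀ᶠ u in 𝓝 s, HasDerivAt H (H u * g u) u) (hg : HasDerivAt g g' s) (hs : H s ≠ 0) :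
    deriv (deriv H) s / H s = g s ^ 2 + g' := by
  rw [deriv_deriv_eq_of_eventually_hasDerivAt hH (hH.self_of_nhds.mul hg)]
  field_simp

lemma eventually_hasDerivAt_of_eqOn {F G φ : ℝ → ℝ} {U : Set ℝ} {s : ℝ} (hU : IsOpen U)
    (hs : s ∈ U) (hFG : EqOn F G U) (hG : ∀ u ∈ U, HasDerivAt G (φ u) u) :
    ∀ᶠ u in 𝓝 s, HasDerivAt F (φ u) u :=
  eventually_of_mem (hU.mem_nhds hs) fun u hu =>
    (hG u hu).congr_of_eventuallyEq (eventuallyEq_of_mem (hU.mem_nhds hu) hFG)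

lemma cos_mul_pos_of_mem_Ioo {L u : ℝ} (hL : 0 < L)
    (hu : u ∈ Ioo (-(π / (2 * L))) (π / (2 * L))) :
    0 < cos (L * u) := by
  have hπ : L * (π / (2 * L)) = π / 2 := by field_simp
  apply cos_pos_of_mem_Ioo
  constructor <;> nlinarith [hu.1, hu.2]

section Derivatives

variable {L u : ℝ}

lemma hasDerivAt_tan_mul (hu : cos (L * u) ≠ 0) :
    HasDerivAt (fun v => tan (L * v)) (L / cos (L * u) ^ 2) u := by
  refine ((hasDerivAt_tan hu).comp u ((hasDerivAt_id u).const_mul L)).congr_deriv ?_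
  simp only [mul_one]
  ring

lemma hasDerivAt_neg_log_cos_mul (hu : cos (L * u) ≠ 0) :
    HasDerivAt (fun v => -log (cos (L * v))) (L * tan (L * u)) u := by
  refine ((((hasDerivAt_id u).const_mul L).cos).log hu).neg.congr_deriv ?_
  rw [tan_eq_sin_div_cos]
  simp only [id, mul_one]
  ring

lemma hasDerivAt_exp_mul_mul_cos_mul_rpow (a p : ℝ) (hu : cos (L * u) ≠ 0) :
    HasDerivAt (fun v => exp (a * v) * cos (L * v) ^ p)
      (exp (a * u) * cos (L * u) ^ p * (a - p * L * tan (L * u))) u := by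
  have hexp := ((hasDerivAt_id u).const_mul a).exp
  have hrpow := (((hasDerivAt_id u).const_mul L).cos).rpow_const (p := p) (Or.inl hu)
  refine (hexp.mul hrpow).congr_deriv ?_
  simp only [mul_one, id]
  rw [rpow_sub_one hu, tan_eq_sin_div_cos]
  field_simp
  ring

variable {U : Set ℝ} {s : ℝ} (hU : IsOpen U) (hs : s ∈ U) (hcos : ∀ u ∈ U, cos (L * u) ≠ 0)
include hU hs hcos

lemma deriv_deriv_eq_of_eqOn_neg_log_cos_mul {F : ℝ → ℝ}
    (hF : EqOn F (fun v => -log (cos (L * v))) U) :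
    deriv (deriv F) s = L * (L / cos (L * s) ^ 2) :=
  deriv_deriv_eq_of_eventually_hasDerivAt
    (eventually_hasDerivAt_of_eqOn hU hs hF fun u hu => hasDerivAt_neg_log_cos_mul (hcos u hu))
    ((hasDerivAt_tan_mul (hcos s hs)).const_mul L)

lemma deriv_deriv_div_eq_of_eqOn_exp_mul_mul_cos_mul_rpow {H : ℝ → ℝ} {a p : ℝ}
    (hH : EqOn H (fun v => exp (a * v) * cos (L * v) ^ p) U) (hHs : H s ≠ 0) :
    deriv (deriv H) s / H s = (a - p * L * tan (L * s)) ^ 2 - p * L * (L / cos (L * s) ^ 2) := by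
  rw [deriv_deriv_div_eq_of_eventually_hasDerivAt_mul
    (eventually_hasDerivAt_of_eqOn hU hs hH fun u hu =>
      (hasDerivAt_exp_mul_mul_cos_mul_rpow a p (hcos u hu)).congr_deriv (by rw [hH hu]))
    (((hasDerivAt_tan_mul (hcos s hs)).const_mul _).const_sub _) hHs]
  ring

end Derivatives

theorem stmt_13_general (k : ℕ) (r : ℕ → ℕ)
    (n : ℕ) (hn : n = (∑ j ∈ Finset.Icc 1 k, r j) + 1)
    (C L ε : ℝ) (hC : C = ∑ j ∈ Finset.Icc 1 k, (r j : ℝ) * (j : ℝ))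
    (hL2 : 0 < ((n : ℝ) - 1) * (∑ j ∈ Finset.Icc 1 k, (r j : ℝ) * (j : ℝ) ^ 2) - C ^ 2)
    (hL : L = Real.sqrt
      (((n : ℝ) - 1) * (∑ j ∈ Finset.Icc 1 k, (r j : ℝ) * (j : ℝ) ^ 2) - C ^ 2))
    (hε : ε = Real.pi / (2 * L))
    (h : ℕ → ℝ → ℝ) (f lam : ℝ → ℝ)
    (hh : ∀ i ∈ Finset.Icc 1 k, ∀ s ∈ Set.Ioo (-ε) ε,
      h i s = Real.exp (((i : ℝ) - C / ((n : ℝ) - 1)) * s)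
        * Real.cos (L * s) ^ (-(1 / ((n : ℝ) - 1))))
    (hf : ∀ s ∈ Set.Ioo (-ε) ε, f s = -Real.log (Real.cos (L * s)))
    (hlam : ∀ s ∈ Set.Ioo (-ε) ε,
      lam s = -L ^ 2 / (((n : ℝ) - 1) * Real.cos (L * s) ^ 2)) :
    ∀ s ∈ Set.Ioo (-ε) ε,
      deriv (deriv f) s
        - ∑ j ∈ Finset.Icc 1 k, (r j : ℝ) * deriv (deriv (h j)) s / h j s
        = lam s := by
  intro s hs
  have hm : (n : ℝ) - 1 = ∑ j ∈ Finset.Icc 1 k, (r j : ℝ) := by rw [hn]; push_cast; ring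
  generalize (n : ℝ) - 1 = m at hm hL2 hL hh hlam
  have hm0 : m ≠ 0 := by rintro hm0; rw [hm0] at hL2; nlinarith
  have hLpos : 0 < L := hL ▸ sqrt_pos.mpr hL2
  have hLsq : L ^ 2 = m * (∑ j ∈ Finset.Icc 1 k, (r j : ℝ) * (j : ℝ) ^ 2) - C ^ 2 :=
    hL ▸ sq_sqrt hL2.le
  have hcos : ∀ u ∈ Ioo (-ε) ε, 0 < cos (L * u) :=
    hε ▸ fun u hu => cos_mul_pos_of_mem_Ioo hLpos hu
  have hcos' : ∀ u ∈ Ioo (-ε) ε, cos (L * u) ≠ 0 := fun u hu => (hcos u hu).ne'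
  have hc := hcos' s hs
  have hf'' := deriv_deriv_eq_of_eqOn_neg_log_cos_mul isOpen_Ioo hs hcos' hf
  have hh'' : ∀ j ∈ Finset.Icc 1 k, (r j : ℝ) * deriv (deriv (h j)) s / h j s
      = r j * (((j : ℝ) - C / m + L * tan (L * s) / m) ^ 2 + L ^ 2 / (m * cos (L * s) ^ 2)) := by
    intro j hj
    have hpos : 0 < h j s := hh j hj s hs ▸ mul_pos (exp_pos _) (rpow_pos_of_pos (hcos s hs) _)
    rw [mul_div_assoc, deriv_deriv_div_eq_of_eqOn_exp_mul_mul_cos_mul_rpow isOpen_Ioo hs hcos'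
      (hh j hj) hpos.ne']
    field_simp
    ring
  rw [hf'', Finset.sum_congr rfl hh'', hlam s hs]
  simp only [mul_add, Finset.sum_add_distrib, ← Finset.sum_mul]
  rw [hC, hm, Finset.sum_mul_sub_weightedMean_add_sq _ _ _ _ (hm ▸ hm0), ← hm, ← hC]
  have hsin : tan (L * s) * cos (L * s) = sin (L * s) := tan_mul_cos hc
  field_simp
  linear_combination (-L ^ 2 * (tan (L * s) * cos (L * s) + sin (L * s))) * hsin
    + cos (L * s) ^ 2 * hLsq - L ^ 2 * sin_sq_add_cos_sq (L * s)

/-- In the multiply warped example (with k ≥ 2 fibers, warping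
functions h_i(s) = exp((i − C/(n−1))s)·cos(Ls)^(−1/(n−1)), potential
f(s) = −log cos(Ls), and λ(s) = −L²/((n−1)cos²(Ls)) on I = (−ε, ε)),
the first almost Ricci soliton equation f'' − Σ r_j·h_j''/h_j = λ holds on I. -/
theorem stmt_13 (k : ℕ) (hk : 2 ≤ k) (r : ℕ → ℕ)
    (hr : ∀ j ∈ Finset.Icc 1 k, 0 < r j)
    (n : ℕ) (hn : n = (∑ j ∈ Finset.Icc 1 k, r j) + 1)
    (C L ε : ℝ) (hC : C = ∑ j ∈ Finset.Icc 1 k, (r j : ℝ) * (j : ℝ))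
    (hL2 : 0 < ((n : ℝ) - 1) * (∑ j ∈ Finset.Icc 1 k, (r j : ℝ) * (j : ℝ) ^ 2) - C ^ 2)
    (hL : L = Real.sqrt
      (((n : ℝ) - 1) * (∑ j ∈ Finset.Icc 1 k, (r j : ℝ) * (j : ℝ) ^ 2) - C ^ 2))
    (hε : ε = Real.pi / (2 * L))
    (h : ℕ → ℝ → ℝ) (f lam : ℝ → ℝ)
    (hh : ∀ i ∈ Finset.Icc 1 k, ∀ s ∈ Set.Ioo (-ε) ε,
      h i s = Real.exp (((i : ℝ) - C / ((n : ℝ) - 1)) * s)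
        * Real.cos (L * s) ^ (-(1 / ((n : ℝ) - 1))))
    (hf : ∀ s ∈ Set.Ioo (-ε) ε, f s = -Real.log (Real.cos (L * s)))
    (hlam : ∀ s ∈ Set.Ioo (-ε) ε,
      lam s = -L ^ 2 / (((n : ℝ) - 1) * Real.cos (L * s) ^ 2)) :
    ∀ s ∈ Set.Ioo (-ε) ε,
      deriv (deriv f) s
        - ∑ j ∈ Finset.Icc 1 k, (r j : ℝ) * deriv (deriv (h j)) s / h j s
        = lam s :=
  stmt_13_general k r n hn C L ε hC hL2 hL hε h f lam hh hf hlam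
end

section
/- Let r₁, r₂ ≥ 1 be integers, n = r₁ + r₂ + 1, and A₁, A₂, B₁, B₂, μ₁, μ₂, τ real constants with A₁·B₂ − A₂·B₁ ≠ 0. Let I ⊆ ℝ be an open interval on which A₁·s + B₁ > 0 and A₂·s + B₂ > 0. Suppose a smooth function f on I satisfies, for all s ∈ I, both f'(s) = ((μ₂ − (r₂ − 1)·A₂²)/(A₁B₂ − A₂B₁))·(A₁s + B₁)/(A₂s + B₂) + ((μ₁ − (r₁ − 1)·A₁²)/(A₁B₂ − A₂B₁))·(A₂s + B₂)/(A₁s + B₁) − (r₁ − r₂)·A₁·A₂/(A₁B₂ − A₂B₁), and f''(s) = (1/(2(n − 1)))·( r₁·(μ₁ − (r₁ − 1)·A₁²)/(A₁s + B₁)² + r₂·(μ₂ − (r₂ − 1)·A₂²)/(A₂s + B₂)² − 2·r₁·r₂·A₁·A₂/((A₁s + B₁)·(A₂s + B₂)) ) + τ. Then A₁·A₂ = 0. -/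
set_option maxRecDepth 10000
set_option maxHeartbeats 1000000


private lemma clear_denoms (K r1 r2 m1 m2 A t x y : ℝ) (hx : x ≠ 0) (hy : y ≠ 0)
    (h : m2/y^2 - m1/x^2 = K*(r1*m1/x^2 + r2*m2/y^2 - A/(x*y)) + t) :
    m2*x^2 - m1*y^2 - K*(r1*m1*y^2 + r2*m2*x^2 - A*(x*y)) - t*x^2*y^2 = 0 := by
  field_simp at h
  have h0 : (x*y)^3 * (m2*x^2 - m1*y^2 - K*(r1*m1*y^2 + r2*m2*x^2 - A*(x*y)) - t*x^2*y^2) = 0 := by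
    linear_combination (x*y)^3 * h
  rcases mul_eq_zero.mp h0 with h' | h'
  · exact absurd h' (pow_ne_zero 3 (mul_ne_zero hx hy))
  · exact h'

/-- For the Schouten soliton ODE system over a two-fiber multiply
warped product with affine warping functions h_i(s) = A_i·s + B_i (both positive
on I, with A₁B₂ − A₂B₁ ≠ 0), if a smooth f satisfies the given first- and
second-order equations on I, then A₁·A₂ = 0. -/
theorem stmt_18 (r₁ r₂ n : ℕ) (hr₁ : 1 ≤ r₁) (hr₂ : 1 ≤ r₂)
    (hn : n = r₁ + r₂ + 1)
    (A₁ A₂ B₁ B₂ μ₁ μ₂ τ : ℝ) (hdet : A₁ * B₂ - A₂ * B₁ ≠ 0)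
    (a b : ℝ) (hab : a < b)
    (hpos₁ : ∀ s ∈ Set.Ioo a b, 0 < A₁ * s + B₁)
    (hpos₂ : ∀ s ∈ Set.Ioo a b, 0 < A₂ * s + B₂)
    (f : ℝ → ℝ) (hf : ContDiffOn ℝ (⊤ : ℕ∞) f (Set.Ioo a b))
    (h1 : ∀ s ∈ Set.Ioo a b,
      deriv f s
        = ((μ₂ - ((r₂ : ℝ) - 1) * A₂ ^ 2) / (A₁ * B₂ - A₂ * B₁))
            * ((A₁ * s + B₁) / (A₂ * s + B₂))
          + ((μ₁ - ((r₁ : ℝ) - 1) * A₁ ^ 2) / (A₁ * B₂ - A₂ * B₁))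
            * ((A₂ * s + B₂) / (A₁ * s + B₁))
          - ((r₁ : ℝ) - (r₂ : ℝ)) * A₁ * A₂ / (A₁ * B₂ - A₂ * B₁))
    (h2 : ∀ s ∈ Set.Ioo a b,
      deriv (deriv f) s
        = (1 / (2 * ((n : ℝ) - 1)))
            * ((r₁ : ℝ) * (μ₁ - ((r₁ : ℝ) - 1) * A₁ ^ 2) / (A₁ * s + B₁) ^ 2
              + (r₂ : ℝ) * (μ₂ - ((r₂ : ℝ) - 1) * A₂ ^ 2) / (A₂ * s + B₂) ^ 2
              - 2 * (r₁ : ℝ) * (r₂ : ℝ) * A₁ * A₂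
                / ((A₁ * s + B₁) * (A₂ * s + B₂)))
          + τ) :
    A₁ * A₂ = 0 := by
  by_contra hA
  have hn2 : (2:ℕ) ≤ n := by omega
  have hn2' : (2:ℝ) ≤ (n:ℝ) := by exact_mod_cast hn2
  have hn1 : (2:ℝ) * ((n:ℝ) - 1) ≠ 0 := by nlinarith
  set m₁ : ℝ := μ₁ - ((r₁:ℝ)-1) * A₁^2 with hm₁
  set m₂ : ℝ := μ₂ - ((r₂:ℝ)-1) * A₂^2 with hm₂
  set K : ℝ := 1 / (2 * ((n:ℝ)-1)) with hKdef
  have hK : K ≠ 0 := one_div_ne_zero hn1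
  -- Step 1: the cleared rational identity, pointwise on the interval
  have key : ∀ s ∈ Set.Ioo a b,
      m₂ * (A₁*s+B₁)^2 - m₁ * (A₂*s+B₂)^2
        - K * ((r₁:ℝ) * m₁ * (A₂*s+B₂)^2 + (r₂:ℝ) * m₂ * (A₁*s+B₁)^2
            - 2*(r₁:ℝ)*(r₂:ℝ)*A₁*A₂*((A₁*s+B₁)*(A₂*s+B₂)))
        - τ * (A₁*s+B₁)^2 * (A₂*s+B₂)^2 = 0 := by
    intro s hs
    have h₁ne : A₁*s+B₁ ≠ 0 := ne_of_gt (hpos₁ s hs)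
    have h₂ne : A₂*s+B₂ ≠ 0 := ne_of_gt (hpos₂ s hs)
    have hev : deriv f =ᶠ[nhds s]
        (fun t => (m₂ / (A₁ * B₂ - A₂ * B₁)) * ((A₁*t+B₁)/(A₂*t+B₂))
          + (m₁ / (A₁ * B₂ - A₂ * B₁)) * ((A₂*t+B₂)/(A₁*t+B₁))
          - ((r₁:ℝ)-(r₂:ℝ)) * A₁ * A₂ / (A₁ * B₂ - A₂ * B₁)) := by
      filter_upwards [isOpen_Ioo.mem_nhds hs] with t ht
      exact h1 t ht
    have H1 : HasDerivAt (fun t : ℝ => A₁ * t + B₁) A₁ s := by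
      simpa using ((hasDerivAt_id s).const_mul A₁).add_const B₁
    have H2 : HasDerivAt (fun t : ℝ => A₂ * t + B₂) A₂ s := by
      simpa using ((hasDerivAt_id s).const_mul A₂).add_const B₂
    have Hq1 : HasDerivAt (fun t : ℝ => (A₁*t+B₁)/(A₂*t+B₂))
        ((A₁*(A₂*s+B₂) - (A₁*s+B₁)*A₂)/(A₂*s+B₂)^2) s := H1.div H2 h₂ne
    have Hq2 : HasDerivAt (fun t : ℝ => (A₂*t+B₂)/(A₁*t+B₁))
        ((A₂*(A₁*s+B₁) - (A₂*s+B₂)*A₁)/(A₁*s+B₁)^2) s := H2.div H1 h₁ne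
    have Hg : HasDerivAt
        (fun t => (m₂ / (A₁ * B₂ - A₂ * B₁)) * ((A₁*t+B₁)/(A₂*t+B₂))
          + (m₁ / (A₁ * B₂ - A₂ * B₁)) * ((A₂*t+B₂)/(A₁*t+B₁))
          - ((r₁:ℝ)-(r₂:ℝ)) * A₁ * A₂ / (A₁ * B₂ - A₂ * B₁))
        ((m₂ / (A₁ * B₂ - A₂ * B₁)) * ((A₁*(A₂*s+B₂) - (A₁*s+B₁)*A₂)/(A₂*s+B₂)^2)
          + (m₁ / (A₁ * B₂ - A₂ * B₁)) * ((A₂*(A₁*s+B₁) - (A₂*s+B₂)*A₁)/(A₁*s+B₁)^2)) s :=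
      ((Hq1.const_mul _).add (Hq2.const_mul _)).sub_const _
    have hdd : deriv (deriv f) s
        = m₂/(A₂*s+B₂)^2 - m₁/(A₁*s+B₁)^2 := by
      rw [hev.deriv_eq, Hg.deriv]
      field_simp
      ring
    have h2s := h2 s hs
    rw [hdd] at h2s
    have := clear_denoms K (r₁:ℝ) (r₂:ℝ) m₁ m₂ (2*(r₁:ℝ)*(r₂:ℝ)*A₁*A₂) τ
      (A₁*s+B₁) (A₂*s+B₂) h₁ne h₂ne (by linear_combination h2s)
    linear_combination this
  -- Step 2: package as a polynomial identity and extract coefficients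
  set p : Polynomial ℝ :=
      Polynomial.C (m₂*B₁^2 - m₁*B₂^2
          - K*((r₁:ℝ)*m₁*B₂^2 + (r₂:ℝ)*m₂*B₁^2 - 2*(r₁:ℝ)*(r₂:ℝ)*A₁*A₂*B₁*B₂)
          - τ*B₁^2*B₂^2)
      + Polynomial.C (2*m₂*A₁*B₁ - 2*m₁*A₂*B₂
          - K*(2*(r₁:ℝ)*m₁*A₂*B₂ + 2*(r₂:ℝ)*m₂*A₁*B₁
              - 2*(r₁:ℝ)*(r₂:ℝ)*A₁*A₂*(A₁*B₂+A₂*B₁))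
          - 2*τ*(A₁*B₂+A₂*B₁)*B₁*B₂) * Polynomial.X^1
      + Polynomial.C (m₂*A₁^2 - m₁*A₂^2
          - K*((r₁:ℝ)*m₁*A₂^2 + (r₂:ℝ)*m₂*A₁^2 - 2*(r₁:ℝ)*(r₂:ℝ)*A₁^2*A₂^2)
          - τ*((A₁*B₂+A₂*B₁)^2 + 2*A₁*A₂*B₁*B₂)) * Polynomial.X^2
      + Polynomial.C (-(2*τ*A₁*A₂*(A₁*B₂+A₂*B₁))) * Polynomial.X^3
      + Polynomial.C (-(τ*A₁^2*A₂^2)) * Polynomial.X^4 with hp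
  have hp0 : p = 0 := by
    apply Polynomial.eq_zero_of_infinite_isRoot
    apply Set.Infinite.mono _ (Set.Ioo_infinite hab)
    intro s hs
    simp only [Set.mem_setOf_eq, Polynomial.IsRoot, hp, Polynomial.eval_add,
      Polynomial.eval_mul, Polynomial.eval_pow, Polynomial.eval_C, Polynomial.eval_X]
    linear_combination key s hs
  have coeffs := fun k => congrArg (fun q => Polynomial.coeff q k) hp0
  simp only [hp, Polynomial.coeff_add, Polynomial.coeff_C_mul, Polynomial.coeff_X_pow,
    Polynomial.coeff_C, Polynomial.coeff_zero] at coeffs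
  have e0 := coeffs 0
  have e1 := coeffs 1
  have e2 := coeffs 2
  have e4 := coeffs 4
  norm_num at e0 e1 e2 e4
  -- τ must vanish
  have hτ : τ = 0 := by
    rcases e4 with (h | h) | h
    · exact h
    · exact absurd (mul_eq_zero_of_left h A₂) hA
    · exact absurd (mul_eq_zero_of_right A₁ h) hA
  subst hτ
  -- Cramer elimination gives A₁A₂ = 0
  have hfin : A₁*A₂ * (2*K*(r₁:ℝ)*(r₂:ℝ)*(A₁*B₂-A₂*B₁)^2) = 0 := by
    linear_combination (-2*B₁*B₂) * e2 + (A₁*B₂+A₂*B₁) * e1 + (-2*A₁*A₂) * e0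
  rcases mul_eq_zero.mp hfin with h | h
  · exact hA h
  · have hr1' : (r₁:ℝ) ≠ 0 := Nat.cast_ne_zero.mpr (by omega)
    have hr2' : (r₂:ℝ) ≠ 0 := Nat.cast_ne_zero.mpr (by omega)
    exact absurd h (by
      exact mul_ne_zero (mul_ne_zero (mul_ne_zero (mul_ne_zero two_ne_zero hK) hr1') hr2')
        (pow_ne_zero 2 hdet))
end

section
/- Let r₁, r₂ ≥ 1 be integers, A ≠ 0, B real constants, Cc > 0, μ₁, μ₂ ∈ ℝ, and I ⊆ ℝ an open interval on which A·s + B > 0. Suppose smooth functions f, λ on I satisfy, for all s ∈ I: λ(s) = f''(s); λ(s) = μ₁/(A·s + B)² + A·f'(s)/(A·s + B) − (r₁ − 1)·A²/(A·s + B)²; and λ(s) = μ₂/Cc². Then λ is the constant μ₂/Cc², there exist constants D, E ∈ ℝ with f(s) = (λ/2)·s² + D·s + E for all s ∈ I, and moreover A·D = λ·B and μ₁ = (r₁ − 1)·A². -/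
/-- If a real function has derivative 0 at every point of an open interval, it is
constant on that interval. -/
lemma aux_const_of_deriv_zero {g : ℝ → ℝ} {a b : ℝ}
    (h : ∀ s ∈ Set.Ioo a b, HasDerivAt g 0 s) {x y : ℝ}
    (hx : x ∈ Set.Ioo a b) (hy : y ∈ Set.Ioo a b) : g x = g y := by
  refine (convex_Ioo a b).is_const_of_fderivWithin_eq_zero
    (fun s hs => (h s hs).differentiableAt.differentiableWithinAt)
    (fun s hs => ?_) hx hy
  rw [fderivWithin_of_isOpen isOpen_Ioo hs, (h s hs).hasFDerivAt.fderiv]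
  ext; simp

/-- For the two-fiber soliton system specialized to h₁(s) = A·s + B
(A ≠ 0, A·s + B > 0 on I) and constant h₂ ≡ Cc > 0: λ is the constant μ₂/Cc²,
f(s) = (λ/2)s² + D·s + E for some constants D, E, and moreover A·D = λ·B and
μ₁ = (r₁ − 1)·A². -/
theorem stmt_19 (r₁ r₂ : ℕ) (hr₁ : 1 ≤ r₁) (hr₂ : 1 ≤ r₂)
    (A B Cc μ₁ μ₂ : ℝ) (hA : A ≠ 0) (hCc : 0 < Cc)
    (a b : ℝ) (hab : a < b) (hpos : ∀ s ∈ Set.Ioo a b, 0 < A * s + B)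
    (f lam : ℝ → ℝ)
    (hf : ContDiffOn ℝ (⊤ : ℕ∞) f (Set.Ioo a b))
    (hlam : ContDiffOn ℝ (⊤ : ℕ∞) lam (Set.Ioo a b))
    (e1 : ∀ s ∈ Set.Ioo a b, lam s = deriv (deriv f) s)
    (e2 : ∀ s ∈ Set.Ioo a b,
      lam s = μ₁ / (A * s + B) ^ 2 + A * deriv f s / (A * s + B)
        - ((r₁ : ℝ) - 1) * A ^ 2 / (A * s + B) ^ 2)
    (e3 : ∀ s ∈ Set.Ioo a b, lam s = μ₂ / Cc ^ 2) :
    (∀ s ∈ Set.Ioo a b, lam s = μ₂ / Cc ^ 2) ∧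
    ∃ D E : ℝ,
      (∀ s ∈ Set.Ioo a b, f s = μ₂ / Cc ^ 2 / 2 * s ^ 2 + D * s + E) ∧
      A * D = μ₂ / Cc ^ 2 * B ∧
      μ₁ = ((r₁ : ℝ) - 1) * A ^ 2 := by
  obtain ⟨L, hL⟩ : ∃ L, L = μ₂ / Cc ^ 2 := ⟨_, rfl⟩
  rw [← hL]
  simp only [← hL] at e3
  refine ⟨e3, ?_⟩
  -- differentiability facts
  have hderf : ContDiffOn ℝ (⊤ : ℕ∞) (deriv f) (Set.Ioo a b) :=
    hf.deriv_of_isOpen isOpen_Ioo (by simp)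
  have hdf : ∀ s ∈ Set.Ioo a b, DifferentiableAt ℝ f s := fun s hs =>
    (hf.contDiffAt (isOpen_Ioo.mem_nhds hs)).differentiableAt (by simp)
  have hdf' : ∀ s ∈ Set.Ioo a b, DifferentiableAt ℝ (deriv f) s := fun s hs =>
    (hderf.contDiffAt (isOpen_Ioo.mem_nhds hs)).differentiableAt (by simp)
  obtain ⟨s₀, hs₀⟩ : ∃ s₀ : ℝ, s₀ = (a + b) / 2 := ⟨_, rfl⟩
  have hmid : s₀ ∈ Set.Ioo a b := by rw [hs₀]; exact ⟨by linarith, by linarith⟩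
  obtain ⟨D, hD⟩ : ∃ D : ℝ, D = deriv f s₀ - L * s₀ := ⟨_, rfl⟩
  -- deriv f s = L * s + D
  have hg1 : ∀ s ∈ Set.Ioo a b, HasDerivAt (fun t => deriv f t - L * t) 0 s := by
    intro s hs
    have h1 : HasDerivAt (deriv f) L s := by
      have := (hdf' s hs).hasDerivAt
      rwa [← e1 s hs, e3 s hs] at this
    exact (h1.sub ((hasDerivAt_id s).const_mul L)).congr_deriv (by ring)
  have hfd : ∀ s ∈ Set.Ioo a b, deriv f s = L * s + D := by
    intro s hs
    have h := aux_const_of_deriv_zero hg1 hs hmid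
    linarith [hD]
  -- f s = L/2 * s^2 + D * s + E
  obtain ⟨E, hE⟩ : ∃ E : ℝ, E = f s₀ - (L / 2 * s₀ ^ 2 + D * s₀) := ⟨_, rfl⟩
  have hg2 : ∀ s ∈ Set.Ioo a b,
      HasDerivAt (fun t => f t - (L / 2 * t ^ 2 + D * t)) 0 s := by
    intro s hs
    have h1 : HasDerivAt f (L * s + D) s := by
      have := (hdf s hs).hasDerivAt
      rwa [hfd s hs] at this
    have hp : HasDerivAt (fun t : ℝ => t ^ 2) (2 * s) s := by
      simpa using hasDerivAt_pow 2 s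
    have h2 : HasDerivAt (fun t : ℝ => L / 2 * t ^ 2 + D * t) (L * s + D) s := by
      have := (hp.const_mul (L / 2)).add ((hasDerivAt_id s).const_mul D)
      exact this.congr_deriv (by ring)
    exact (h1.sub h2).congr_deriv (by ring)
  have hfe : ∀ s ∈ Set.Ioo a b, f s = L / 2 * s ^ 2 + D * s + E := by
    intro s hs
    have h := aux_const_of_deriv_zero hg2 hs hmid
    linarith [hE]
  -- polynomial identity from e2
  have key : ∀ s ∈ Set.Ioo a b,
      (A ^ 2 * D - L * A * B) * s + (μ₁ - ((r₁ : ℝ) - 1) * A ^ 2 + A * B * D - L * B ^ 2) = 0 := by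
    intro s hs
    have hne : A * s + B ≠ 0 := ne_of_gt (hpos s hs)
    have h2 := e2 s hs
    rw [e3 s hs, hfd s hs] at h2
    field_simp at h2
    have h4 : (A * s + B) ^ 3 *
        ((A ^ 2 * D - L * A * B) * s
          + (μ₁ - ((r₁ : ℝ) - 1) * A ^ 2 + A * B * D - L * B ^ 2)) = 0 := by
      linear_combination -(A * s + B) ^ 3 * h2
    exact (mul_eq_zero.mp h4).resolve_left (pow_ne_zero 3 hne)
  obtain ⟨s₁, hs₁⟩ : ∃ s₁ : ℝ, s₁ = (3 * a + b) / 4 := ⟨_, rfl⟩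
  have hmid2 : s₁ ∈ Set.Ioo a b := by rw [hs₁]; exact ⟨by linarith, by linarith⟩
  have k1 := key _ hmid
  have k2 := key _ hmid2
  have hP : A ^ 2 * D - L * A * B = 0 := by
    have hne : s₀ - s₁ ≠ 0 := by rw [hs₀, hs₁]; intro h; nlinarith [sub_eq_zero.mp h]
    have h4 : (A ^ 2 * D - L * A * B) * (s₀ - s₁) = 0 := by linear_combination k1 - k2
    exact (mul_eq_zero.mp h4).resolve_right hne
  have hAD : A * D = L * B := by
    have h5 : A * (A * D - L * B) = 0 := by linear_combination hP
    have := (mul_eq_zero.mp h5).resolve_left hA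
    linarith
  have hmu : μ₁ = ((r₁ : ℝ) - 1) * A ^ 2 := by
    linear_combination k1 - s₀ * hP - B * hAD
  exact ⟨D, E, fun s hs => by rw [hfe s hs], hAD, hmu⟩
end
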